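/- arXiv:1309.5715 — 14 statements merged into one kernel-verified Lean document; each statement's English description precedes it below -/
import Mathlib

section
/- Flett's mean value theorem: If f : ℝ → ℝ is differentiable at every point of the closed interval [a,b] (with a < b), and f'(a) = f'(b), then there exists a point η ∈ (a,b) such that f'(η) = (f(η) - f(a))/(η - a). -/
/-!
Let `g x` be the slope of `f` between `a` and `x`, extended by `g a = f' a`. Then `g` is continuous
on `[a, b]`, and for `x ≠ a` its derivative is `(f' x - g x) / (x - a)`, so the points `η` sought
are exactly the critical points of `g` in `(a, b)`. Because `f' b = f' a = g a`, the one-sided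
derivative of `g` at `b` is `-(g b - g a) / (b - a)`: if `g a < g b`, then `g` decreases into `b`,
so its maximum on `[a, b]` is attained at an interior point (symmetrically if `g a > g b`), and if
`g a = g b` Rolle's theorem applies.
-/

open Set Function

lemma IsMaxOn.nonneg_of_hasDerivWithinAt_Icc_right {g : ℝ → ℝ} {a b D : ℝ} (hab : a < b)
    (hmax : IsMaxOn g (Icc a b) b) (hg : HasDerivWithinAt g D (Icc a b) b) : 0 ≤ D := by
  have hcone : a - b ∈ posTangentConeAt (Icc a b) b :=
    sub_mem_posTangentConeAt_of_segment_subset (by rw [segment_symm, segment_eq_Icc hab.le])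
  have h := hmax.localize.hasFDerivWithinAt_nonpos hg hcone
  rw [ContinuousLinearMap.toSpanSingleton_apply, smul_eq_mul] at h
  nlinarith

lemma exists_hasDerivAt_eq_zero_of_lt_of_hasDerivWithinAt_right_neg {g g' : ℝ → ℝ} {a b D : ℝ}
    (hab : a < b) (hgc : ContinuousOn g (Icc a b)) (hlt : g a < g b)
    (hgb : HasDerivWithinAt g D (Icc a b) b) (hD : D < 0)
    (hg : ∀ x ∈ Ioo a b, HasDerivAt g (g' x) x) : ∃ c ∈ Ioo a b, g' c = 0 := by
  obtain ⟨c, hc, hmax⟩ := isCompact_Icc.exists_isMaxOn (nonempty_Icc.2 hab.le) hgc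
  have hca : c ≠ a := by
    rintro rfl
    exact (hmax (right_mem_Icc.2 hab.le)).not_gt hlt
  have hcb : c ≠ b := by
    rintro rfl
    exact hD.not_ge (hmax.nonneg_of_hasDerivWithinAt_Icc_right hab hgb)
  have hcI : c ∈ Ioo a b := ⟨hc.1.lt_of_ne hca.symm, hc.2.lt_of_ne hcb⟩
  exact ⟨c, hcI, (hmax.isLocalMax (Icc_mem_nhds hcI.1 hcI.2)).hasDerivAt_eq_zero (hg c hcI)⟩

lemma exists_hasDerivAt_eq_zero_of_hasDerivWithinAt_right_eq_neg_slope {g g' : ℝ → ℝ} {a b : ℝ}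
    (hab : a < b) (hgc : ContinuousOn g (Icc a b))
    (hgb : HasDerivWithinAt g (-slope g a b) (Icc a b) b)
    (hg : ∀ x ∈ Ioo a b, HasDerivAt g (g' x) x) : ∃ c ∈ Ioo a b, g' c = 0 := by
  have hba : 0 < b - a := sub_pos.2 hab
  rcases lt_trichotomy (g a) (g b) with hlt | heq | hgt
  · refine exists_hasDerivAt_eq_zero_of_lt_of_hasDerivWithinAt_right_neg hab hgc hlt hgb ?_ hg
    rw [slope_def_field, neg_neg_iff_pos]
    exact div_pos (sub_pos.2 hlt) hba
  · exact exists_hasDerivAt_eq_zero hab hgc heq hg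
  · have hD : - -slope g a b < 0 := by
      rw [neg_neg, slope_def_field]
      exact div_neg_of_neg_of_pos (sub_neg.2 hgt) hba
    obtain ⟨c, hc, h⟩ := exists_hasDerivAt_eq_zero_of_lt_of_hasDerivWithinAt_right_neg hab hgc.neg
      (neg_lt_neg hgt) hgb.neg hD fun x hx => (hg x hx).neg
    exact ⟨c, hc, neg_eq_zero.1 h⟩

section FlettFunction

variable {f : ℝ → ℝ} {s : Set ℝ} {a x d : ℝ}

lemma HasDerivWithinAt.slope_of_ne {f'x : ℝ} (h : HasDerivWithinAt f f'x s x) (hx : x ≠ a) :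
    HasDerivWithinAt (slope f a) ((f'x - slope f a x) / (x - a)) s x := by
  have hxa : x - a ≠ 0 := sub_ne_zero.2 hx
  have hq : HasDerivWithinAt (fun y => (f y - f a) / (y - a))
      ((f'x * (x - a) - (f x - f a) * 1) / (x - a) ^ 2) s x :=
    (h.sub_const (f a)).div ((hasDerivWithinAt_id x s).sub_const a) hxa
  rw [slope_def_field f a x, show slope f a = fun y => (f y - f a) / (y - a) from
    funext (slope_def_field f a)]
  convert hq using 1
  field_simp

lemma HasDerivWithinAt.update_slope_of_ne {f'x : ℝ} (h : HasDerivWithinAt f f'x s x) (hx : x ≠ a) :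
    HasDerivWithinAt (update (slope f a) a d) ((f'x - slope f a x) / (x - a)) s x :=
  (h.slope_of_ne hx).congr_of_eventuallyEq
    (eventually_nhdsWithin_of_eventually_nhds ((eventually_ne_nhds hx).mono
      fun _ hy => update_of_ne hy _ _)) (update_of_ne hx _ _)

lemma HasDerivWithinAt.continuousWithinAt_update_slope (h : HasDerivWithinAt f d s a) :
    ContinuousWithinAt (update (slope f a) a d) s a :=
  continuousWithinAt_update_same.2 (hasDerivWithinAt_iff_tendsto_slope.1 h)

end FlettFunction

/-- **Flett's mean value theorem.** If `f` is differentiable at every point of the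
closed interval `[a,b]` (one-sidedly at the endpoints), with derivative `f'`, and
`f'(a) = f'(b)`, then there exists `η ∈ (a,b)` with `f'(η) = (f(η) - f(a))/(η - a)`. -/
theorem flett_mean_value_theorem (f f' : ℝ → ℝ) (a b : ℝ) (hab : a < b)
    (hf : ∀ x ∈ Set.Icc a b, HasDerivWithinAt f (f' x) (Set.Icc a b) x)
    (hends : f' a = f' b) :
    ∃ η ∈ Set.Ioo a b, f' η = (f η - f a) / (η - a) := by
  set g := update (slope f a) a (f' a)
  have hgc : ContinuousOn g (Icc a b) := fun x hx => by
    rcases eq_or_ne x a with rfl | hxa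
    · exact (hf x hx).continuousWithinAt_update_slope
    · exact ((hf x hx).update_slope_of_ne hxa).continuousWithinAt
  have hgb : HasDerivWithinAt g (-slope g a b) (Icc a b) b := by
    convert (hf b (right_mem_Icc.2 hab.le)).update_slope_of_ne hab.ne' using 1
    simp only [g, slope_def_field, update_self, update_of_ne hab.ne', hends, ← neg_div, neg_sub]
  obtain ⟨η, hη, hη0⟩ := exists_hasDerivAt_eq_zero_of_hasDerivWithinAt_right_eq_neg_slope hab hgc
    hgb fun x hx => ((hf x (Ioo_subset_Icc_self hx)).update_slope_of_ne hx.1.ne').hasDerivAt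
      (Icc_mem_nhds hx.1 hx.2)
  rw [div_eq_zero_iff, sub_eq_zero, sub_eq_zero] at hη0
  exact ⟨η, hη, hη0.resolve_right hη.1.ne' ▸ slope_def_field f a η⟩
end

section
/- Riedel–Sahoo theorem: If f : ℝ → ℝ is differentiable at every point of the closed interval [a,b] (with a < b), then there exists a point η ∈ (a,b) such that (f(η) - f(a))/(η - a) = f'(η) - ((f'(b) - f'(a))/(b - a)) · (η - a)/2. -/
/-!
Subtracting the quadratic `k x² / 2` with `k = (f' b - f' a) / (b - a)` turns `f` into a function
`G` with `G' a = G' b`, and the claim becomes Flett's mean value theorem for `G`: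
`G η - G a = (η - a) G' η` for some `η ∈ (a, b)`.

For Flett's theorem we may assume `G' a = G' b = 0`. Then `φ = slope G a` is continuous on `[a, b]`
and `φ' x = (G' x - φ x) / (x - a)`, so a zero of `φ'` is the point we want. By the mean value
theorem some `c ∈ (a, b)` has `φ' c = φ b / (b - a)`, while `φ' b = -φ b / (b - a)`;
Darboux's theorem on `[c, b]` then yields a zero of `φ'`.
-/

open Set

lemma hasDerivWithinAt_slope {G : ℝ → ℝ} {g a x : ℝ} {s : Set ℝ} (hx : x ≠ a)
    (hG : HasDerivWithinAt G g s x) :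
    HasDerivWithinAt (slope G a) ((g - slope G a x) / (x - a)) s x := by
  have hxa : x - a ≠ 0 := sub_ne_zero.2 hx
  rw [show slope G a = fun y => (G y - G a) / (y - a) from funext (slope_def_field G a)]
  refine ((hG.sub_const (G a)).fun_div ((hasDerivWithinAt_id x s).sub_const a) hxa).congr_deriv ?_
  simp only [id]
  field_simp

lemma continuousWithinAt_slope_self {G : ℝ → ℝ} {a : ℝ} {s : Set ℝ}
    (hG : HasDerivWithinAt G 0 s a) : ContinuousWithinAt (slope G a) s a := by
  rw [← continuousWithinAt_sdiff_self, ContinuousWithinAt, slope_same]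
  exact hasDerivWithinAt_iff_tendsto_slope.1 hG

lemma exists_mem_Ico_eq_zero_of_eq_neg {φ φ' : ℝ → ℝ} {c b : ℝ} (hcb : c < b)
    (hφ : ∀ x ∈ Icc c b, HasDerivWithinAt φ (φ' x) (Icc c b) x) (h : φ' c = -φ' b) :
    ∃ η ∈ Ico c b, φ' η = 0 := by
  rcases lt_trichotomy (φ' b) 0 with hb | hb | hb
  · obtain ⟨η, hη, hη0⟩ :=
      exists_hasDerivWithinAt_eq_of_lt_of_gt hcb.le hφ (by linarith) hb
    exact ⟨η, Ioo_subset_Ico_self hη, hη0⟩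
  · exact ⟨c, left_mem_Ico.2 hcb, by linarith⟩
  · obtain ⟨η, hη, hη0⟩ :=
      exists_hasDerivWithinAt_eq_of_gt_of_lt hcb.le hφ (by linarith) hb
    exact ⟨η, Ioo_subset_Ico_self hη, hη0⟩

lemma exists_sub_eq_mul_deriv_of_deriv_eq_zero {G G' : ℝ → ℝ} {a b : ℝ} (hab : a < b)
    (hG : ∀ x ∈ Icc a b, HasDerivWithinAt G (G' x) (Icc a b) x)
    (ha : G' a = 0) (hb : G' b = 0) :
    ∃ η ∈ Ioo a b, G η - G a = (η - a) * G' η := by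
  set φ := slope G a
  set φ' : ℝ → ℝ := fun x => (G' x - φ x) / (x - a)
  have hφ : ∀ x ∈ Ioc a b, HasDerivWithinAt φ (φ' x) (Icc a b) x := fun x hx =>
    hasDerivWithinAt_slope hx.1.ne' (hG x (Ioc_subset_Icc_self hx))
  have hφc : ContinuousOn φ (Icc a b) := by
    intro x hx
    rcases hx.1.eq_or_lt with rfl | hax
    · exact continuousWithinAt_slope_self (ha ▸ hG a hx)
    · exact (hφ x ⟨hax, hx.2⟩).continuousWithinAt
  obtain ⟨c, hc, hφ'c⟩ := exists_hasDerivAt_eq_slope φ φ' hab hφc fun x hx =>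
    (hφ x (Ioo_subset_Ioc_self hx)).hasDerivAt (Icc_mem_nhds hx.1 hx.2)
  have hφ'cb : φ' c = -φ' b := by
    simp only [hφ'c, φ', hb, φ, slope_same]
    ring
  have hφcb : ∀ x ∈ Icc c b, HasDerivWithinAt φ (φ' x) (Icc c b) x := fun x hx =>
    (hφ x ⟨hc.1.trans_le hx.1, hx.2⟩).mono (Icc_subset_Icc_left hc.1.le)
  obtain ⟨η, hη, hφ'η⟩ := exists_mem_Ico_eq_zero_of_eq_neg hc.2 hφcb hφ'cb
  have hηa : η - a ≠ 0 := sub_ne_zero.2 (hc.1.trans_le hη.1).ne'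
  refine ⟨η, ⟨hc.1.trans_le hη.1, hη.2⟩, ?_⟩
  have hG'η : G' η = (G η - G a) / (η - a) := by
    simpa [φ', φ, hηa, sub_eq_zero, slope_def_field] using hφ'η
  rw [hG'η]
  field_simp

theorem exists_sub_eq_mul_deriv_of_deriv_eq {G G' : ℝ → ℝ} {a b : ℝ} (hab : a < b)
    (hG : ∀ x ∈ Icc a b, HasDerivWithinAt G (G' x) (Icc a b) x) (hG' : G' a = G' b) :
    ∃ η ∈ Ioo a b, G η - G a = (η - a) * G' η := by
  have hH : ∀ x ∈ Icc a b,
      HasDerivWithinAt (fun y => G y - G' a * y) (G' x - G' a) (Icc a b) x := fun x hx =>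
    (hG x hx).fun_sub ((hasDerivWithinAt_id x _).const_mul (G' a)) |>.congr_deriv (by simp)
  obtain ⟨η, hη, h⟩ :=
    exists_sub_eq_mul_deriv_of_deriv_eq_zero hab hH (sub_self _) (by rw [hG', sub_self])
  exact ⟨η, hη, by linear_combination h⟩

/-- **Riedel–Sahoo theorem.** If `f` is differentiable at every point of the closed
interval `[a,b]` (one-sidedly at the endpoints), with derivative `f'`, then there exists
`η ∈ (a,b)` with `(f(η) - f(a))/(η - a) = f'(η) - ((f'(b) - f'(a))/(b - a)) · (η - a)/2`. -/
theorem riedel_sahoo_theorem (f f' : ℝ → ℝ) (a b : ℝ) (hab : a < b)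
    (hf : ∀ x ∈ Set.Icc a b, HasDerivWithinAt f (f' x) (Set.Icc a b) x) :
    ∃ η ∈ Set.Ioo a b,
      (f η - f a) / (η - a) = f' η - (f' b - f' a) / (b - a) * ((η - a) / 2) := by
  set k := (f' b - f' a) / (b - a)
  have hk : k * (b - a) = f' b - f' a := div_mul_cancel₀ _ (sub_ne_zero.2 hab.ne')
  have hG : ∀ x ∈ Icc a b,
      HasDerivWithinAt (fun y => f y - k * y ^ 2 / 2) (f' x - k * x) (Icc a b) x :=
    fun x hx =>
      ((hf x hx).fun_sub ((hasDerivWithinAt_pow 2 x).const_mul k |>.div_const 2)).congr_deriv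
        (by ring)
  obtain ⟨η, hη, h⟩ := exists_sub_eq_mul_deriv_of_deriv_eq hab hG (by linear_combination hk)
  refine ⟨η, hη, ?_⟩
  rw [div_eq_iff (sub_ne_zero.2 hη.1.ne')]
  linear_combination h
end

section
/- Trahan's theorem: If f : ℝ → ℝ is differentiable at every point of the closed interval [a,b] (with a < b) and (f'(b) - (f(b)-f(a))/(b-a)) · (f'(a) - (f(b)-f(a))/(b-a)) ≥ 0, then there exists a point η ∈ (a,b] such that f'(η) = (f(η) - f(a))/(η - a). -/
/-!
Let `g` be the slope function `x ↦ (f x - f a) / (x - a)`, extended by `g a = f' a`. It is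
continuous on `[a, b]` and differentiable on `(a, b]` with `g' x = (f' x - g x) / (x - a)`, so
the theorem asks for a zero of `g'` in `(a, b]`. The hypothesis says that `g b - g a` and `g' b`
do not have the same strict sign. If, say, `g' b > 0 ≥ g b - g a`, then `g` takes values below
`g b ≤ g a` just left of `b`, so `g` attains its minimum on `[a, b]` at an interior point, where
`g'` vanishes by Fermat's theorem.
-/

open Set Filter Topology Function

section Slope

variable {𝕜 F : Type*} [NontriviallyNormedField 𝕜] [DecidableEq 𝕜] [NormedAddCommGroup F]
  [NormedSpace 𝕜 F] {f : 𝕜 → F} {s : Set 𝕜} {a x : 𝕜} {f'a f'x : F}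

theorem continuousOn_update_slope (hfa : HasDerivWithinAt f f'a s a) (hf : ContinuousOn f s) :
    ContinuousOn (update (slope f a) a f'a) s := by
  intro x hx
  rcases eq_or_ne x a with rfl | hxa
  · exact continuousWithinAt_update_same.2 (hasDerivWithinAt_iff_tendsto_slope.1 hfa)
  · rw [continuousWithinAt_update_of_ne hxa, slope_fun_def]
    exact ((continuousWithinAt_id.sub continuousWithinAt_const).inv₀ (sub_ne_zero.2 hxa)).smul
      ((hf x hx).sub continuousWithinAt_const)

theorem HasDerivWithinAt.update_slope (hfx : HasDerivWithinAt f f'x s x) (hxa : x ≠ a) (c : F) :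
    HasDerivWithinAt (update (slope f a) a c) ((x - a)⁻¹ • (f'x - slope f a x)) s x := by
  have hslope : HasDerivWithinAt (slope f a) ((x - a)⁻¹ • (f'x - slope f a x)) s x := by
    rw [show slope f a = fun y => (y - a)⁻¹ • (f y - f a) from funext (slope_def_module f a)]
    convert (((hasDerivWithinAt_id x s).sub_const a).inv (sub_ne_zero.2 hxa)).smul
      (hfx.sub_const (f a)) using 1
    · rfl
    rw [smul_sub, smul_smul, sub_eq_add_neg, ← neg_smul]
    congr 2
    simp only [id]
    field_simp
  exact hslope.congr_of_eventuallyEq (eventually_nhdsWithin_of_eventually_nhds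
    ((eventually_ne_nhds hxa).mono fun y hy => update_of_ne hy ..)) (update_of_ne hxa ..)

end Slope

theorem IsLocalMinOn.hasDerivWithinAt_Icc_right_nonpos {g : ℝ → ℝ} {g' a b : ℝ} (hab : a < b)
    (hmin : IsLocalMinOn g (Icc a b) b) (hg : HasDerivWithinAt g g' (Icc a b) b) : g' ≤ 0 := by
  have hdir : a - b ∈ posTangentConeAt (Icc a b) b :=
    sub_mem_posTangentConeAt_of_segment_subset (by rw [segment_symm, segment_eq_Icc hab.le])
  have h := hmin.hasFDerivWithinAt_nonneg hg hdir
  rw [ContinuousLinearMap.toSpanSingleton_apply, smul_eq_mul] at h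
  exact nonpos_of_mul_nonneg_right h (sub_neg.2 hab)

theorem exists_hasDerivWithinAt_eq_zero_of_pos_of_le {g g' : ℝ → ℝ} {a b : ℝ} (hab : a < b)
    (hgc : ContinuousOn g (Icc a b))
    (hg : ∀ x ∈ Ioc a b, HasDerivWithinAt g (g' x) (Icc a b) x)
    (hb : 0 < g' b) (hba : g b ≤ g a) : ∃ c ∈ Ioo a b, g' c = 0 := by
  obtain ⟨c, hc, hmin⟩ := isCompact_Icc.exists_isMinOn (nonempty_Icc.2 hab.le) hgc
  have hcb : g c < g b := by
    refine (hmin (right_mem_Icc.2 hab.le)).lt_of_ne fun hcb => hb.not_ge ?_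
    have hbmin : IsMinOn g (Icc a b) b := fun x hx => hcb ▸ hmin hx
    exact hbmin.localize.hasDerivWithinAt_Icc_right_nonpos hab (hg b (right_mem_Ioc.2 hab))
  have hc' : c ∈ Ioo a b :=
    ⟨hc.1.lt_of_ne (by rintro rfl; linarith), hc.2.lt_of_ne (by rintro rfl; exact hcb.false)⟩
  have hnhds : Icc a b ∈ 𝓝 c := Icc_mem_nhds hc'.1 hc'.2
  exact ⟨c, hc', (hmin.isLocalMin hnhds).hasDerivAt_eq_zero
    ((hg c (Ioo_subset_Ioc_self hc')).hasDerivAt hnhds)⟩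

theorem exists_hasDerivWithinAt_eq_zero_of_sub_mul_nonpos {g g' : ℝ → ℝ} {a b : ℝ} (hab : a < b)
    (hgc : ContinuousOn g (Icc a b))
    (hg : ∀ x ∈ Ioc a b, HasDerivWithinAt g (g' x) (Icc a b) x)
    (hsign : (g b - g a) * g' b ≤ 0) : ∃ c ∈ Ioc a b, g' c = 0 := by
  rcases lt_trichotomy (g' b) 0 with hb | hb | hb
  · obtain ⟨c, hc, hc0⟩ := exists_hasDerivWithinAt_eq_zero_of_pos_of_le (g' := -g') hab hgc.neg
      (fun x hx => (hg x hx).neg) (neg_pos.2 hb)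
      (neg_le_neg (sub_nonneg.1 (nonneg_of_mul_nonpos_left hsign hb)))
    exact ⟨c, Ioo_subset_Ioc_self hc, neg_eq_zero.1 hc0⟩
  · exact ⟨b, right_mem_Ioc.2 hab, hb⟩
  · obtain ⟨c, hc, hc0⟩ := exists_hasDerivWithinAt_eq_zero_of_pos_of_le hab hgc hg hb
      (sub_nonpos.1 (nonpos_of_mul_nonpos_left hsign hb))
    exact ⟨c, Ioo_subset_Ioc_self hc, hc0⟩

/-- **Trahan's theorem.** If `f` is differentiable at every point of `[a,b]`
(one-sidedly at the endpoints), with derivative `f'`, and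
`(f'(b) - (f(b)-f(a))/(b-a)) · (f'(a) - (f(b)-f(a))/(b-a)) ≥ 0`, then there exists
`η ∈ (a,b]` with `f'(η) = (f(η) - f(a))/(η - a)`. -/
theorem trahan_theorem (f f' : ℝ → ℝ) (a b : ℝ) (hab : a < b)
    (hf : ∀ x ∈ Set.Icc a b, HasDerivWithinAt f (f' x) (Set.Icc a b) x)
    (hcond : (f' b - (f b - f a) / (b - a)) * (f' a - (f b - f a) / (b - a)) ≥ 0) :
    ∃ η ∈ Set.Ioc a b, f' η = (f η - f a) / (η - a) := by
  set g := update (slope f a) a (f' a)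
  set g' := fun x => (x - a)⁻¹ • (f' x - slope f a x)
  have hgc : ContinuousOn g (Icc a b) := continuousOn_update_slope
    (hf a (left_mem_Icc.2 hab.le)) fun x hx => (hf x hx).continuousWithinAt
  have hg : ∀ x ∈ Ioc a b, HasDerivWithinAt g (g' x) (Icc a b) x :=
    fun x hx => (hf x (Ioc_subset_Icc_self hx)).update_slope hx.1.ne' _
  have hsign : (g b - g a) * g' b ≤ 0 := calc
    (g b - g a) * g' b
      = -((b - a)⁻¹ * ((f' b - (f b - f a) / (b - a)) * (f' a - (f b - f a) / (b - a)))) := by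
      simp only [g, g', update_self, update_of_ne hab.ne', slope_def_field, smul_eq_mul]
      ring
    _ ≤ 0 := neg_nonpos.2 (mul_nonneg (inv_nonneg.2 (sub_pos.2 hab).le) hcond)
  obtain ⟨η, hη, hη0⟩ := exists_hasDerivWithinAt_eq_zero_of_sub_mul_nonpos hab hgc hg hsign
  refine ⟨η, hη, ?_⟩
  simp only [g', smul_eq_mul, mul_eq_zero, inv_eq_zero, sub_eq_zero, slope_def_field] at hη0
  exact hη0.resolve_left hη.1.ne'
end

section
/- Trahan's Cauchy-type theorem: Let f, g : ℝ → ℝ be differentiable at every point of the closed interval [a,b] (with a < b), suppose g'(x) ≠ 0 for every x ∈ [a,b] (so that g is strictly monotone and in particular g(a) ≠ g(b)), and suppose (f'(a)/g'(a) - (f(b)-f(a))/(g(b)-g(a))) · ( ((g(b)-g(a))/(b-a)) · f'(b) - ((f(b)-f(a))/(b-a)) · g'(b) ) ≥ 0. Then there exists a point η ∈ (a,b] such that f'(η)/g'(η) = (f(η) - f(a))/(g(η) - g(a)). -/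
/-!
Consider the Cauchy quotient `Q x = (f x - f a) / (g x - g a)`, extended continuously to `x = a`
by `Q a = f' a / g' a`; on `(a, b]` its derivative is
`(f' x (g x - g a) - (f x - f a) g' x) / (g x - g a)²`, which vanishes exactly at the points `η`
sought. If it never vanished, Darboux's theorem would give it a constant sign on `(a, b]`, so `Q`
would be strictly monotone on `[a, b]` and `Q b - Q a` would have the sign of `Q' b`. The
hypothesis says precisely that `Q a - Q b` and `Q' b` do not have opposite signs.
-/

open Set Filter Topology Function

theorem sub_mul_pos_of_hasDerivWithinAt_ne_zero {Q Q' : ℝ → ℝ} {a b : ℝ} (hab : a < b)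
    (hQc : ContinuousOn Q (Icc a b))
    (hQ : ∀ x ∈ Ioc a b, HasDerivWithinAt Q (Q' x) (Ioc a b) x)
    (hQ' : ∀ x ∈ Ioc a b, Q' x ≠ 0) :
    0 < (Q b - Q a) * Q' b := by
  have ha : a ∈ Icc a b := left_mem_Icc.2 hab.le
  have hb : b ∈ Icc a b := right_mem_Icc.2 hab.le
  have hderiv : ∀ x ∈ interior (Icc a b), x ∈ Ioc a b ∧ deriv Q x = Q' x := fun x hx => by
    rw [interior_Icc] at hx
    exact ⟨Ioo_subset_Ioc_self hx,
      ((hQ x (Ioo_subset_Ioc_self hx)).hasDerivAt (Ioc_mem_nhds hx.1 hx.2)).deriv⟩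
  rcases hasDerivWithinAt_forall_lt_or_forall_gt_of_forall_ne (convex_Ioc a b) hQ hQ'
    with hneg | hpos
  · have hanti := strictAntiOn_of_deriv_neg (convex_Icc a b) hQc fun x hx =>
      (hderiv x hx).2 ▸ hneg x (hderiv x hx).1
    exact mul_pos_of_neg_of_neg (sub_neg.2 (hanti ha hb hab)) (hneg b (right_mem_Ioc.2 hab))
  · have hmono := strictMonoOn_of_deriv_pos (convex_Icc a b) hQc fun x hx =>
      (hderiv x hx).2 ▸ hpos x (hderiv x hx).1
    exact mul_pos (sub_pos.2 (hmono ha hb hab)) (hpos b (right_mem_Ioc.2 hab))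

theorem apply_ne_apply_left_of_hasDerivWithinAt_ne_zero {g g' : ℝ → ℝ} {a b : ℝ}
    (hg : ∀ x ∈ Icc a b, HasDerivWithinAt g (g' x) (Icc a b) x)
    (hg' : ∀ x ∈ Ioc a b, g' x ≠ 0) {x : ℝ} (hx : x ∈ Ioc a b) :
    g x ≠ g a := by
  have hsub : Icc a x ⊆ Icc a b := Icc_subset_Icc_right hx.2
  have hsub' : Ioc a x ⊆ Icc a b := Ioc_subset_Icc_self.trans hsub
  have hpos := sub_mul_pos_of_hasDerivWithinAt_ne_zero hx.1
    (fun y hy => (hg y (hsub hy)).continuousWithinAt.mono hsub)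
    (fun y hy => (hg y (hsub' hy)).mono hsub')
    (fun y hy => hg' y ⟨hy.1, hy.2.trans hx.2⟩)
  exact sub_ne_zero.1 (left_ne_zero_of_mul hpos.ne')

theorem tendsto_div_sub_div_sub_of_hasDerivWithinAt {f g : ℝ → ℝ} {f' g' a : ℝ} {s : Set ℝ}
    (hf : HasDerivWithinAt f f' s a) (hg : HasDerivWithinAt g g' s a) (hg' : g' ≠ 0) :
    Tendsto (fun x => (f x - f a) / (g x - g a)) (𝓝[s \ {a}] a) (𝓝 (f' / g')) := by
  refine ((hasDerivWithinAt_iff_tendsto_slope.1 hf).div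
    (hasDerivWithinAt_iff_tendsto_slope.1 hg) hg').congr' ?_
  filter_upwards [self_mem_nhdsWithin] with x hx
  rw [Pi.div_apply, slope_def_field, slope_def_field,
    div_div_div_cancel_right₀ (sub_ne_zero.2 hx.2)]

noncomputable def cauchyQuotient (f g : ℝ → ℝ) (a c : ℝ) : ℝ → ℝ :=
  update (fun x => (f x - f a) / (g x - g a)) a c

section cauchyQuotient

variable {f g : ℝ → ℝ} {a c : ℝ}

theorem cauchyQuotient_self : cauchyQuotient f g a c a = c :=
  update_self ..

theorem cauchyQuotient_of_ne {x : ℝ} (hx : x ≠ a) :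
    cauchyQuotient f g a c x = (f x - f a) / (g x - g a) :=
  update_of_ne hx ..

theorem hasDerivWithinAt_cauchyQuotient {f' g' x : ℝ} {s : Set ℝ}
    (hf : HasDerivWithinAt f f' s x) (hg : HasDerivWithinAt g g' s x) (hxa : x ≠ a)
    (hgx : g x ≠ g a) :
    HasDerivWithinAt (cauchyQuotient f g a c)
      ((f' * (g x - g a) - (f x - f a) * g') / (g x - g a) ^ 2) s x := by
  refine ((hf.sub_const (f a)).div (hg.sub_const (g a)) (sub_ne_zero.2 hgx)).congr_of_eventuallyEq
    ?_ (cauchyQuotient_of_ne hxa)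
  filter_upwards [nhdsWithin_le_nhds (eventually_ne_nhds hxa)] with y hy
  exact cauchyQuotient_of_ne hy

theorem continuousOn_cauchyQuotient {f' g' : ℝ → ℝ} {b : ℝ}
    (hf : ∀ x ∈ Icc a b, HasDerivWithinAt f (f' x) (Icc a b) x)
    (hg : ∀ x ∈ Icc a b, HasDerivWithinAt g (g' x) (Icc a b) x)
    (hg'a : g' a ≠ 0) (hgx : ∀ x ∈ Ioc a b, g x ≠ g a) :
    ContinuousOn (cauchyQuotient f g a (f' a / g' a)) (Icc a b) := by
  intro x hx
  rcases eq_or_ne x a with rfl | hxa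
  · exact continuousWithinAt_update_same.2
      (tendsto_div_sub_div_sub_of_hasDerivWithinAt (hf x hx) (hg x hx) hg'a)
  · exact (hasDerivWithinAt_cauchyQuotient (hf x hx) (hg x hx) hxa
      (hgx x ⟨hx.1.lt_of_ne' hxa, hx.2⟩)).continuousWithinAt

end cauchyQuotient

/-- **Trahan's Cauchy-type theorem.** Let `f, g` be differentiable at every point of
`[a,b]` (one-sidedly at the endpoints), with derivatives `f', g'`, let `g'(x) ≠ 0` on
`[a,b]`, and suppose
`(f'(a)/g'(a) - (f(b)-f(a))/(g(b)-g(a))) · (((g(b)-g(a))/(b-a))·f'(b) - ((f(b)-f(a))/(b-a))·g'(b)) ≥ 0`.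
Then there exists `η ∈ (a,b]` with `f'(η)/g'(η) = (f(η) - f(a))/(g(η) - g(a))`. -/
theorem trahan_cauchy_theorem (f f' g g' : ℝ → ℝ) (a b : ℝ) (hab : a < b)
    (hf : ∀ x ∈ Set.Icc a b, HasDerivWithinAt f (f' x) (Set.Icc a b) x)
    (hg : ∀ x ∈ Set.Icc a b, HasDerivWithinAt g (g' x) (Set.Icc a b) x)
    (hg' : ∀ x ∈ Set.Icc a b, g' x ≠ 0)
    (hcond : (f' a / g' a - (f b - f a) / (g b - g a)) *
        ((g b - g a) / (b - a) * f' b - (f b - f a) / (b - a) * g' b) ≥ 0) :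
    ∃ η ∈ Set.Ioc a b, f' η / g' η = (f η - f a) / (g η - g a) := by
  have hgx : ∀ x ∈ Ioc a b, g x ≠ g a := fun x =>
    apply_ne_apply_left_of_hasDerivWithinAt_ne_zero hg fun y hy => hg' y (Ioc_subset_Icc_self hy)
  set Q := cauchyQuotient f g a (f' a / g' a)
  set Q' := fun x => (f' x * (g x - g a) - (f x - f a) * g' x) / (g x - g a) ^ 2
  have hQ : ∀ x ∈ Ioc a b, HasDerivWithinAt Q (Q' x) (Ioc a b) x := fun x hx =>
    (hasDerivWithinAt_cauchyQuotient (hf x (Ioc_subset_Icc_self hx))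
      (hg x (Ioc_subset_Icc_self hx)) hx.1.ne' (hgx x hx)).mono Ioc_subset_Icc_self
  by_contra! hne
  have hQ' : ∀ x ∈ Ioc a b, Q' x ≠ 0 := fun x hx hQx => by
    have hG := sub_ne_zero.2 (hgx x hx)
    rw [div_eq_zero_iff, sub_eq_zero, or_iff_left (pow_ne_zero 2 hG)] at hQx
    exact hne x hx ((div_eq_div_iff (hg' x (Ioc_subset_Icc_self hx)) hG).2 hQx)
  have hmono := sub_mul_pos_of_hasDerivWithinAt_ne_zero hab
    (continuousOn_cauchyQuotient hf hg (hg' a (left_mem_Icc.2 hab.le)) hgx) hQ hQ'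
  have hG := sub_ne_zero.2 (hgx b (right_mem_Ioc.2 hab))
  have hscale : 0 < (g b - g a) ^ 2 / (b - a) := by positivity
  have hfactor : (g b - g a) / (b - a) * f' b - (f b - f a) / (b - a) * g' b =
      Q' b * ((g b - g a) ^ 2 / (b - a)) := by
    simp only [Q']
    field_simp [sub_ne_zero.2 hab.ne']
  have hQa : Q a = f' a / g' a := cauchyQuotient_self
  have hQb : Q b = (f b - f a) / (g b - g a) := cauchyQuotient_of_ne hab.ne'
  rw [← hQa, ← hQb, hfactor, ← neg_sub (Q b), neg_mul, ← mul_assoc, ge_iff_le, neg_nonneg]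
    at hcond
  exact hcond.not_gt (mul_pos hmono hscale)
end

section
/- Tong's theorem: Let f : ℝ → ℝ be continuous on the closed interval [a,b] (with a < b) and differentiable on the open interval (a,b). If A_f(a,b) = I_f(a,b), then there exists a point η ∈ (a,b) such that f'(η) = (f(η) - f(a))/(η - a). -/
/-!
The error of the trapezoid rule on `[a, x]`, `(x - a) (f x + f a) / 2 - ∫_a^x f`, vanishes at
`x = a`, and the hypothesis says exactly that it vanishes at `x = b`. By Rolle its derivative
`((x - a) f'(x) - (f x - f a)) / 2` has a zero `η ∈ (a, b)`, which is the claimed point.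
-/

open Set

section TrapezoidDefect

variable (f : ℝ → ℝ) {a b : ℝ}

theorem hasDerivAt_integral_right_of_continuousOn_Icc (hf : ContinuousOn f (Icc a b)) {x : ℝ}
    (hx : x ∈ Ioo a b) : HasDerivAt (fun u => ∫ t in a..u, f t) (f x) x :=
  intervalIntegral.integral_hasDerivAt_right
    ((hf.mono (Icc_subset_Icc_right hx.2.le)).intervalIntegrable_of_Icc hx.1.le)
    ((hf.mono Ioo_subset_Icc_self).stronglyMeasurableAtFilter isOpen_Ioo x hx)
    (hf.continuousAt (Icc_mem_nhds hx.1 hx.2))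

noncomputable def trapezoidDefect (a x : ℝ) : ℝ :=
  (x - a) * (f x + f a) / 2 - ∫ t in a..x, f t

@[simp]
theorem trapezoidDefect_self : trapezoidDefect f a a = 0 := by
  simp [trapezoidDefect]

theorem trapezoidDefect_eq_zero_of_mean_eq (hab : a ≠ b)
    (hmean : (f a + f b) / 2 = (1 / (b - a)) * ∫ t in a..b, f t) :
    trapezoidDefect f a b = 0 := by
  have hba : b - a ≠ 0 := sub_ne_zero.mpr hab.symm
  rw [trapezoidDefect, add_comm (f b), mul_div_assoc, hmean]
  field_simp
  ring

theorem continuousOn_trapezoidDefect (hab : a ≤ b) (hf : ContinuousOn f (Icc a b)) :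
    ContinuousOn (trapezoidDefect f a) (Icc a b) := by
  have hprim := intervalIntegral.continuousOn_primitive_interval
    (by rw [uIcc_of_le hab]; exact hf.integrableOn_Icc : MeasureTheory.IntegrableOn f (uIcc a b))
  rw [uIcc_of_le hab] at hprim
  exact (((continuousOn_id.sub continuousOn_const).mul
    (hf.add continuousOn_const)).div_const 2).sub hprim

theorem hasDerivAt_trapezoidDefect (hf : ContinuousOn f (Icc a b)) {x d : ℝ}
    (hx : x ∈ Ioo a b) (hfx : HasDerivAt f d x) :
    HasDerivAt (trapezoidDefect f a) ((x - a) * d / 2 - (f x - f a) / 2) x := by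
  have hlin : HasDerivAt (fun u => (u - a) * (f u + f a) / 2)
      ((f x + f a + (x - a) * d) / 2) x := by
    simpa using (((hasDerivAt_id x).sub_const a).mul (hfx.add_const (f a))).div_const 2
  exact (hlin.sub (hasDerivAt_integral_right_of_continuousOn_Icc f hf hx)).congr_deriv (by ring)

end TrapezoidDefect

open intervalIntegral in
/-- **Tong's theorem.** Let `f` be continuous on `[a,b]` and differentiable on `(a,b)`
with derivative `f'`. If the arithmetic mean `(f(a)+f(b))/2` equals the integral mean
`(1/(b-a)) ∫_a^b f`, then there exists `η ∈ (a,b)` with `f'(η) = (f(η)-f(a))/(η-a)`. -/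
theorem tong_theorem (f f' : ℝ → ℝ) (a b : ℝ) (hab : a < b)
    (hfc : ContinuousOn f (Set.Icc a b))
    (hf : ∀ x ∈ Set.Ioo a b, HasDerivAt f (f' x) x)
    (hmean : (f a + f b) / 2 = (1 / (b - a)) * ∫ t in a..b, f t) :
    ∃ η ∈ Set.Ioo a b, f' η = (f η - f a) / (η - a) := by
  have hends : trapezoidDefect f a a = trapezoidDefect f a b := by
    rw [trapezoidDefect_self, trapezoidDefect_eq_zero_of_mean_eq f hab.ne hmean]
  obtain ⟨η, hη, hzero⟩ := exists_hasDerivAt_eq_zero hab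
    (continuousOn_trapezoidDefect f hab.le hfc) hends
    (fun x hx => hasDerivAt_trapezoidDefect f hfc hx (hf x hx))
  refine ⟨η, hη, ?_⟩
  rw [eq_div_iff (sub_ne_zero.mpr hη.1.ne')]
  linarith
end

section
/- Tong's second theorem: Let f : ℝ → ℝ be continuous on the closed interval [a,b] (with a < b) and differentiable on the open interval (a,b). Then there exists a point η ∈ (a,b) such that f'(η) = (f(η) - f(a))/(η - a) + (6 · (A_f(a,b) - I_f(a,b))/(b-a)²) · (η - a). -/
/-!
Let `E(x) = (x - a) (f a + f x) / 2 - ∫_a^x f` be the error of the trapezoidal rule on `[a, x]`.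
It vanishes at `a` and `E'(x) = ((x - a) f'(x) - (f x - f a)) / 2`. Cauchy's mean value theorem
for `E` and `(x - a)³` gives `η` with `(b - a)³ E'(η) = 3 E(b) (η - a)²`, and the coefficient
`6 (A_f(a,b) - I_f(a,b)) / (b - a)²` of the theorem is `6 E(b) / (b - a)³`.
-/

open Set intervalIntegral

section Primitive

variable {E : Type*} [NormedAddCommGroup E] [NormedSpace ℝ E]
  {f : ℝ → E} {a b : ℝ}

theorem ContinuousOn.continuousOn_integral_Icc (hab : a ≤ b) (hf : ContinuousOn f (Icc a b)) :
    ContinuousOn (fun u => ∫ t in a..u, f t) (Icc a b) := by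
  rw [← uIcc_of_le hab] at hf ⊢
  exact continuousOn_primitive_interval (hf.integrableOn_compact isCompact_uIcc)

theorem ContinuousOn.hasDerivAt_integral_of_mem_Ioo [CompleteSpace E] {x : ℝ}
    (hf : ContinuousOn f (Icc a b)) (hx : x ∈ Ioo a b) : HasDerivAt (fun u => ∫ t in a..u, f t) (f x) x :=
  integral_hasDerivAt_right
    ((hf.mono (Icc_subset_Icc_right hx.2.le)).intervalIntegrable_of_Icc hx.1.le)
    ((hf.mono Ioo_subset_Icc_self).stronglyMeasurableAtFilter isOpen_Ioo x hx)
    (hf.continuousAt (Icc_mem_nhds hx.1 hx.2))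

end Primitive

noncomputable def trapezoidError (f : ℝ → ℝ) (a x : ℝ) : ℝ :=
  (x - a) * ((f a + f x) / 2) - ∫ t in a..x, f t

section TrapezoidError

variable {f f' : ℝ → ℝ} {a b : ℝ}

@[simp]
theorem trapezoidError_self (f : ℝ → ℝ) (a : ℝ) : trapezoidError f a a = 0 := by
  simp [trapezoidError]

theorem continuousOn_trapezoidError (hab : a ≤ b) (hf : ContinuousOn f (Icc a b)) :
    ContinuousOn (trapezoidError f a) (Icc a b) :=
  ((continuousOn_id.sub continuousOn_const).mul
    ((continuousOn_const.add hf).div_const 2)).sub (hf.continuousOn_integral_Icc hab)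

theorem hasDerivAt_trapezoidError {x : ℝ} (hf : ContinuousOn f (Icc a b)) (hx : x ∈ Ioo a b)
    (hf' : HasDerivAt f (f' x) x) :
    HasDerivAt (trapezoidError f a) (((x - a) * f' x - (f x - f a)) / 2) x := by
  have h : HasDerivAt (fun u => (u - a) * ((f a + f u) / 2) - ∫ t in a..u, f t)
      (1 * ((f a + f x) / 2) + (x - a) * (f' x / 2) - f x) x :=
    (((hasDerivAt_id' x).sub_const a).fun_mul ((hf'.const_add (f a)).div_const 2)).fun_sub
      (hf.hasDerivAt_integral_of_mem_Ioo hx)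
  exact h.congr_deriv (by ring)

theorem exists_cube_mul_deriv_trapezoidError (hab : a < b) (hfc : ContinuousOn f (Icc a b))
    (hf : ∀ x ∈ Ioo a b, HasDerivAt f (f' x) x) :
    ∃ η ∈ Ioo a b, (b - a) ^ 3 * (((η - a) * f' η - (f η - f a)) / 2) =
      trapezoidError f a b * (3 * (η - a) ^ 2) := by
  have hcube (x : ℝ) : HasDerivAt (fun u => (u - a) ^ 3) (3 * (x - a) ^ 2) x := by
    simpa using ((hasDerivAt_id x).sub_const a).fun_pow 3
  obtain ⟨η, hη, h⟩ := exists_ratio_hasDerivAt_eq_ratio_slope (trapezoidError f a) _ hab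
    (continuousOn_trapezoidError hab.le hfc)
    (fun x hx => hasDerivAt_trapezoidError hfc hx (hf x hx)) (fun u => (u - a) ^ 3) _
    (by fun_prop) (fun x _ => hcube x)
  exact ⟨η, hη, by simpa using h⟩

end TrapezoidError

open intervalIntegral in
/-- **Tong's second theorem.** Let `f` be continuous on `[a,b]` and differentiable on
`(a,b)` with derivative `f'`. Then there exists `η ∈ (a,b)` with
`f'(η) = (f(η)-f(a))/(η-a) + (6(A_f(a,b) - I_f(a,b))/(b-a)²)·(η-a)`, where
`A_f(a,b) = (f(a)+f(b))/2` and `I_f(a,b) = (1/(b-a)) ∫_a^b f`. -/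
theorem tong_second_theorem (f f' : ℝ → ℝ) (a b : ℝ) (hab : a < b)
    (hfc : ContinuousOn f (Set.Icc a b))
    (hf : ∀ x ∈ Set.Ioo a b, HasDerivAt f (f' x) x) :
    ∃ η ∈ Set.Ioo a b, f' η = (f η - f a) / (η - a) +
      6 * ((f a + f b) / 2 - (1 / (b - a)) * ∫ t in a..b, f t) / (b - a) ^ 2 * (η - a) := by
  obtain ⟨η, hη, h⟩ := exists_cube_mul_deriv_trapezoidError hab hfc hf
  have hba : b - a ≠ 0 := sub_ne_zero.mpr hab.ne'
  have hηa : η - a ≠ 0 := sub_ne_zero.mpr hη.1.ne'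
  have hcoeff : 6 * ((f a + f b) / 2 - (1 / (b - a)) * ∫ t in a..b, f t) / (b - a) ^ 2 =
      6 * trapezoidError f a b / (b - a) ^ 3 := by
    rw [trapezoidError]
    field_simp
  refine ⟨η, hη, ?_⟩
  rw [hcoeff]
  field_simp
  linear_combination 2 * h
end

section
/- Let f, g : ℝ → ℝ be differentiable at every point of the closed interval [a,b] (with a < b) and twice differentiable at the point a, suppose g(a) ≠ g(b), and set K = (f(b)-f(a))/(g(b)-g(a)). If (f'(a) - K·g'(a)) · (f''(a) - K·g''(a)) > 0, then there exists a point ξ ∈ (a,b) such that f'(a) - (f(ξ)-f(a))/(ξ-a) = K · ( g'(a) - (g(ξ)-g(a))/(ξ-a) ). -/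
open Set Filter Topology

lemma flett_aux_pos (h h' : ℝ → ℝ) (H a b : ℝ) (hab : a < b)
    (hd : ∀ x ∈ Set.Icc a b, HasDerivWithinAt h (h' x) (Set.Icc a b) x)
    (hd2 : HasDerivWithinAt h' H (Set.Ici a) a)
    (heq : h b = h a) (h1 : 0 < h' a) (h2 : 0 < H) :
    ∃ ξ ∈ Set.Ioo a b, (h ξ - h a) / (ξ - a) = h' a := by
  have hcont : ContinuousOn h (Icc a b) := fun x hx => (hd x hx).continuousWithinAt
  -- h' x > h' a eventually to the right of a
  have hslope : Tendsto (slope h' a) (𝓝[>] a) (𝓝 H) := by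
    have := hasDerivWithinAt_iff_tendsto_slope.mp hd2
    rwa [Set.Ici_sdiff_left] at this
  have hev : ∀ᶠ x in 𝓝[>] a, h' a < h' x := by
    filter_upwards [hslope.eventually (eventually_gt_nhds h2),
      self_mem_nhdsWithin] with x hx hx'
    have hxa : (0:ℝ) < x - a := sub_pos.mpr hx'
    have : 0 < (h' x - h' a) / (x - a) := by
      simpa [slope_def_field, div_eq_iff hxa.ne'] using hx
    have h3 := mul_pos this hxa
    rw [div_mul_cancel₀ _ hxa.ne'] at h3
    linarith
  obtain ⟨u, hu, huP⟩ := (nhdsGT_basis a).eventually_iff.mp hev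
  set x₀ := (a + min u b) / 2 with hx₀def
  have hmin : a < min u b := lt_min hu hab
  have hax₀ : a < x₀ := by simp only [hx₀def]; linarith
  have hx₀min : x₀ < min u b := by simp only [hx₀def]; linarith
  have hx₀b : x₀ < b := hx₀min.trans_le (min_le_right _ _)
  have hx₀u : x₀ < u := hx₀min.trans_le (min_le_left _ _)
  -- MVT on [a, x₀]
  have hsub : Icc a x₀ ⊆ Icc a b := Icc_subset_Icc le_rfl hx₀b.le
  obtain ⟨c, hc, hc'⟩ := exists_hasDerivAt_eq_slope h h' hax₀
    (hcont.mono hsub)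
    (fun x hx => by
      have hxI : x ∈ Ioo a b := ⟨hx.1, hx.2.trans hx₀b⟩
      exact (hd x (Ioo_subset_Icc_self hxI)).hasDerivAt
        (Icc_mem_nhds hxI.1 hxI.2))
  have hF0 : h' a < (h x₀ - h a) / (x₀ - a) := by
    rw [← hc']
    exact huP ⟨hc.1, hc.2.trans hx₀u⟩
  -- IVT on [x₀, b] for F x = (h x - h a) / (x - a)
  set F : ℝ → ℝ := fun x => (h x - h a) / (x - a) with hFdef
  have hFc : ContinuousOn F (Icc x₀ b) := by
    apply ContinuousOn.div
    · exact ((hcont.mono (Icc_subset_Icc hax₀.le le_rfl)).sub continuousOn_const)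
    · exact (continuousOn_id.sub continuousOn_const)
    · intro x hx
      have : a < x := hax₀.trans_le hx.1
      exact sub_ne_zero.mpr this.ne'
  have hFb : F b = 0 := by simp [hFdef, heq]
  have : h' a ∈ Icc (F b) (F x₀) := by
    rw [hFb]; exact ⟨h1.le, hF0.le⟩
  obtain ⟨ξ, hξmem, hξ⟩ := intermediate_value_Icc' hx₀b.le hFc this
  refine ⟨ξ, ⟨hax₀.trans_le hξmem.1, lt_of_le_of_ne hξmem.2 ?_⟩, hξ⟩
  intro hξb
  rw [hξb, hFb] at hξ
  exact h1.ne hξ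

lemma flett_aux (h h' : ℝ → ℝ) (H a b : ℝ) (hab : a < b)
    (hd : ∀ x ∈ Set.Icc a b, HasDerivWithinAt h (h' x) (Set.Icc a b) x)
    (hd2 : HasDerivWithinAt h' H (Set.Ici a) a)
    (heq : h b = h a) (hc : 0 < h' a * H) :
    ∃ ξ ∈ Set.Ioo a b, (h ξ - h a) / (ξ - a) = h' a := by
  rcases mul_pos_iff.mp hc with ⟨h1, h2⟩ | ⟨h1, h2⟩
  · exact flett_aux_pos h h' H a b hab hd hd2 heq h1 h2
  · obtain ⟨ξ, hξmem, hξ⟩ := flett_aux_pos (fun x => -h x) (fun x => -h' x) (-H) a b hab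
      (fun x hx => (hd x hx).neg) hd2.neg (by simp [heq])
      (by simpa using h1) (by simpa using h2)
    refine ⟨ξ, hξmem, ?_⟩
    have : -((h ξ - h a) / (ξ - a)) = -h' a := by
      rw [← hξ]; ring_nf
    linarith



/-- Let `f, g` be differentiable at every point of `[a,b]` (one-sidedly at the endpoints),
with derivatives `f', g'`, and twice differentiable at `a` from the right, with second
derivatives `fa''`, `ga''` there. Let `g(a) ≠ g(b)` and set `K = (f(b)-f(a))/(g(b)-g(a))`.
If `(f'(a) - K·g'(a)) · (f''(a) - K·g''(a)) > 0`, then there exists `ξ ∈ (a,b)` with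
`f'(a) - (f(ξ)-f(a))/(ξ-a) = K·(g'(a) - (g(ξ)-g(a))/(ξ-a))`. -/
theorem flett_type_lemma_second_derivative (f f' g g' : ℝ → ℝ) (fa'' ga'' : ℝ)
    (a b : ℝ) (hab : a < b)
    (hf : ∀ x ∈ Set.Icc a b, HasDerivWithinAt f (f' x) (Set.Icc a b) x)
    (hg : ∀ x ∈ Set.Icc a b, HasDerivWithinAt g (g' x) (Set.Icc a b) x)
    (hf'' : HasDerivWithinAt f' fa'' (Set.Ici a) a)
    (hg'' : HasDerivWithinAt g' ga'' (Set.Ici a) a)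
    (hgab : g a ≠ g b)
    (hcond : (f' a - (f b - f a) / (g b - g a) * g' a) *
        (fa'' - (f b - f a) / (g b - g a) * ga'') > 0) :
    ∃ ξ ∈ Set.Ioo a b, f' a - (f ξ - f a) / (ξ - a) =
      (f b - f a) / (g b - g a) * (g' a - (g ξ - g a) / (ξ - a)) := by
  set K := (f b - f a) / (g b - g a) with hK
  have hgne : g b - g a ≠ 0 := sub_ne_zero.mpr (Ne.symm hgab)
  obtain ⟨ξ, hξmem, hξ⟩ := flett_aux (fun x => f x - K * g x)
    (fun x => f' x - K * g' x) (fa'' - K * ga'') a b hab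
    (fun x hx => (hf x hx).sub ((hg x hx).const_mul K))
    (hf''.sub (hg''.const_mul K))
    (by
      have : K * (g b - g a) = f b - f a := div_mul_cancel₀ _ hgne
      show f b - K * g b = f a - K * g a
      linarith [this])
    hcond
  refine ⟨ξ, hξmem, ?_⟩
  have hne : ξ - a ≠ 0 := sub_ne_zero.mpr hξmem.1.ne'
  field_simp at hξ ⊢
  linarith [hξ]
end

section
/- Let f, g : ℝ → ℝ be differentiable at every point of the closed interval [a,b] (with a < b) and twice differentiable at the point a, suppose g(a) ≠ g(b), and set K = (f(b)-f(a))/(g(b)-g(a)). If (f'(a) - K·g'(a)) · (f''(a) - K·g''(a)) > 0, then there exists a point η ∈ (a,b) such that f'(η) - (f(η)-f(a))/(η-a) = K · ( g'(η) - (g(η)-g(a))/(η-a) ). -/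
open Set Filter Topology

lemma aux_flett (h h' : ℝ → ℝ) (h2a a b : ℝ) (hab : a < b)
    (hh : ∀ x ∈ Set.Icc a b, HasDerivWithinAt h (h' x) (Set.Icc a b) x)
    (hh'' : HasDerivWithinAt h' h2a (Set.Ici a) a)
    (heq : h b = h a) (h1 : 0 < h' a) (h2 : 0 < h2a) :
    ∃ η ∈ Set.Ioo a b, h' η = (h η - h a) / (η - a) := by
  set φ : ℝ → ℝ := fun x => if x = a then h' a else (h x - h a) / (x - a) with hφdef
  have hconth : ContinuousOn h (Icc a b) := fun x hx => (hh x hx).continuousWithinAt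
  have hφa : φ a = h' a := by simp [hφdef]
  have hφne : ∀ y, y ≠ a → φ y = (h y - h a) / (y - a) := by
    intro y hy; simp [hφdef, hy]
  -- continuity of φ on Icc a b
  have hcontφ : ContinuousOn φ (Icc a b) := by
    intro x hx
    rcases eq_or_ne x a with rfl | hxa
    · rw [← continuousWithinAt_diff_self]
      have hs := hasDerivWithinAt_iff_tendsto_slope.mp (hh x hx)
      have ht : Tendsto φ (𝓝[Icc x b \ {x}] x) (𝓝 (h' x)) := by
        refine hs.congr' ?_
        filter_upwards [self_mem_nhdsWithin] with y hy
        have hyx : y ≠ x := hy.2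
        rw [hφne y hyx, slope_def_field]
      rw [ContinuousWithinAt, hφa]
      exact ht
    · have hratio : ContinuousWithinAt (fun y => (h y - h a) / (y - a)) (Icc a b) x :=
        ((hconth x hx).sub continuousWithinAt_const).div
          ((continuous_id.sub continuous_const).continuousWithinAt) (sub_ne_zero.mpr hxa)
      refine hratio.congr_of_eventuallyEq ?_ (hφne x hxa)
      filter_upwards [mem_nhdsWithin_of_mem_nhds (isOpen_ne.mem_nhds hxa)] with y hy
      exact hφne y hy
  -- derivative of φ at interior points
  have hΦ : ∀ x ∈ Ioo a b, HasDerivAt φ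
      ((h' x * (x - a) - (h x - h a) * 1) / (x - a) ^ 2) x := by
    intro x hx
    have hd : HasDerivAt h (h' x) x :=
      (hh x (Ioo_subset_Icc_self hx)).hasDerivAt (Icc_mem_nhds hx.1 hx.2)
    have hr : HasDerivAt (fun y => (h y - h a) / (y - a))
        ((h' x * (x - a) - (h x - h a) * 1) / (x - a) ^ 2) x :=
      (hd.sub_const (h a)).div ((hasDerivAt_id x).sub_const a) (sub_ne_zero.mpr hx.1.ne')
    refine hr.congr_of_eventuallyEq ?_
    filter_upwards [isOpen_ne.mem_nhds hx.1.ne'] with y hy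
    exact hφne y hy
  -- h' > h' a just right of a
  have hslope' : Tendsto (slope h' a) (𝓝[>] a) (𝓝 h2a) := by
    have := hasDerivWithinAt_iff_tendsto_slope.mp hh''
    rwa [Ici_sdiff_left] at this
  have hev : ∀ᶠ y in 𝓝[>] a, h' a < h' y ∧ y < b := by
    have h0 : ∀ᶠ y in 𝓝[>] a, 0 < slope h' a y :=
      hslope'.eventually (eventually_gt_nhds h2)
    filter_upwards [h0, self_mem_nhdsWithin,
      Ioo_mem_nhdsGT_of_mem (show a ∈ Ico a b from ⟨le_rfl, hab⟩)] with y hy1 hy2 hy3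
    refine ⟨?_, hy3.2⟩
    rw [slope_def_field] at hy1
    have hya : (0:ℝ) < y - a := sub_pos.mpr hy2
    nlinarith [mul_pos hy1 hya, div_mul_cancel₀ (h' y - h' a) (ne_of_gt hya)]
  obtain ⟨u, hu, hsub⟩ := mem_nhdsGT_iff_exists_Ioc_subset.mp hev
  set c : ℝ := min u ((a + b) / 2) with hcdef
  have hac : a < c := lt_min hu (by linarith)
  have hcu : c ≤ u := min_le_left _ _
  have hcmem : c ∈ Ioc a u := ⟨hac, hcu⟩
  have hcb : c < b := (hsub hcmem).2
  -- MVT on [a,c] : φ c > φ a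
  obtain ⟨ξ, hξ, hξeq⟩ := exists_hasDerivAt_eq_slope h h' hac
    (hconth.mono (Icc_subset_Icc le_rfl hcb.le))
    (fun x hx => (hh x ⟨hx.1.le, (hx.2.trans hcb).le⟩).hasDerivAt
      (Icc_mem_nhds hx.1 (hx.2.trans hcb)))
  have hξgt : h' a < h' ξ := (hsub ⟨hξ.1, hξ.2.le.trans hcu⟩).1
  have hφc : φ a < φ c := by
    rw [hφa, hφne c hac.ne', ← hξeq]
    exact hξgt
  have hφb : φ b = 0 := by
    rw [hφne b (hab.ne'), heq, sub_self, zero_div]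
  -- IVT: find d ∈ (c, b) with φ d = φ a
  obtain ⟨d, hd, hdeq⟩ := intermediate_value_Icc' hcb.le
    (hcontφ.mono (Icc_subset_Icc hac.le le_rfl))
    (show φ a ∈ Icc (φ b) (φ c) from ⟨by rw [hφb, hφa]; exact h1.le, hφc.le⟩)
  have hdb : d < b := lt_of_le_of_ne hd.2 (fun hdb => by rw [hdb, hφb, hφa] at hdeq; linarith)
  have had : a < d := hac.trans_le hd.1
  -- Rolle on [a, d]
  obtain ⟨η, hη, hΦη⟩ := exists_hasDerivAt_eq_zero had
    (hcontφ.mono (Icc_subset_Icc le_rfl hdb.le))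
    hdeq.symm
    (fun x hx => hΦ x ⟨hx.1, hx.2.trans hdb⟩)
  refine ⟨η, ⟨hη.1, hη.2.trans hdb⟩, ?_⟩
  have hηa : η - a ≠ 0 := sub_ne_zero.mpr hη.1.ne'
  rw [div_eq_zero_iff] at hΦη
  rcases hΦη with hnum | hden
  · field_simp
    linarith [hnum]
  · exact absurd hden (pow_ne_zero 2 hηa)


/-- Let `f, g` be differentiable at every point of `[a,b]` (one-sidedly at the endpoints),
with derivatives `f', g'`, and twice differentiable at `a` from the right, with second
derivatives `fa''`, `ga''` there. Let `g(a) ≠ g(b)` and set `K = (f(b)-f(a))/(g(b)-g(a))`.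
If `(f'(a) - K·g'(a)) · (f''(a) - K·g''(a)) > 0`, then there exists `η ∈ (a,b)` with
`f'(η) - (f(η)-f(a))/(η-a) = K·(g'(η) - (g(η)-g(a))/(η-a))`. -/
theorem flett_type_theorem_second_derivative (f f' g g' : ℝ → ℝ) (fa'' ga'' : ℝ)
    (a b : ℝ) (hab : a < b)
    (hf : ∀ x ∈ Set.Icc a b, HasDerivWithinAt f (f' x) (Set.Icc a b) x)
    (hg : ∀ x ∈ Set.Icc a b, HasDerivWithinAt g (g' x) (Set.Icc a b) x)
    (hf'' : HasDerivWithinAt f' fa'' (Set.Ici a) a)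
    (hg'' : HasDerivWithinAt g' ga'' (Set.Ici a) a)
    (hgab : g a ≠ g b)
    (hcond : (f' a - (f b - f a) / (g b - g a) * g' a) *
        (fa'' - (f b - f a) / (g b - g a) * ga'') > 0) :
    ∃ η ∈ Set.Ioo a b, f' η - (f η - f a) / (η - a) =
      (f b - f a) / (g b - g a) * (g' η - (g η - g a) / (η - a)) := by
  set K := (f b - f a) / (g b - g a) with hK
  have hgba : g b - g a ≠ 0 := sub_ne_zero.mpr (Ne.symm hgab)
  have hKeq : K * (g b - g a) = f b - f a := div_mul_cancel₀ _ hgba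
  have hbeq : f b - K * g b = f a - K * g a := by ring_nf at hKeq ⊢; linarith
  rcases mul_pos_iff.mp hcond with ⟨h1, h2⟩ | ⟨h1, h2⟩
  · obtain ⟨η, hη, heq⟩ := aux_flett (fun x => f x - K * g x) (fun x => f' x - K * g' x)
      (fa'' - K * ga'') a b hab
      (fun x hx => (hf x hx).sub ((hg x hx).const_mul K))
      (hf''.sub (hg''.const_mul K))
      hbeq h1 h2
    refine ⟨η, hη, ?_⟩
    have hηa : η - a ≠ 0 := sub_ne_zero.mpr hη.1.ne'
    field_simp at heq ⊢
    linarith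
  · obtain ⟨η, hη, heq⟩ := aux_flett (fun x => -(f x - K * g x)) (fun x => -(f' x - K * g' x))
      (-(fa'' - K * ga'')) a b hab
      (fun x hx => ((hf x hx).sub ((hg x hx).const_mul K)).neg)
      ((hf''.sub (hg''.const_mul K)).neg)
      (by simp [hbeq]) (by show (0:ℝ) < -(f' a - K * g' a); linarith) (by linarith)
    refine ⟨η, hη, ?_⟩
    have hηa : η - a ≠ 0 := sub_ne_zero.mpr hη.1.ne'
    field_simp at heq ⊢
    linarith
end

section
/- Wayment's theorem (integral Flett's mean value theorem): If f : ℝ → ℝ is continuous on the closed interval [a,b] (with a < b) and f(a) = f(b), then there exists a point η ∈ (a,b) such that f(η) = (1/(η-a)) · ∫_a^η f(t) dt. -/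
/-!
Write `F x = ∫ t in a..x, f t`; the claim is Flett's mean value theorem for `F`, since `F' = f`
and `f a = f b`. The slope `g x = (F x - F a) / (x - a)`, extended by `g a = F' a`, is
continuous on `[a, b]` and satisfies `(x - a) g' x = F' x - g x`. If `g a = g b`, Rolle's
theorem applies. If `g b < g a = F' b`, then `g' b > 0`, so neither endpoint minimizes `g` on
`[a, b]` and the minimum is an interior critical point of `g`; the case `g a < g b` is symmetric.
-/

open Set Topology

theorem IsMinOn.hasDerivAt_nonpos_of_right_endpoint {g : ℝ → ℝ} {a b g' : ℝ} (hab : a < b)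
    (hmin : IsMinOn g (Icc a b) b) (hg : HasDerivAt g g' b) : g' ≤ 0 := by
  have hcone : a - b ∈ posTangentConeAt (Icc a b) b :=
    sub_mem_posTangentConeAt_of_segment_subset <|
      (convex_Icc a b).segment_subset (right_mem_Icc.2 hab.le) (left_mem_Icc.2 hab.le)
  have h : 0 ≤ (a - b) * g' := by
    simpa using hmin.localize.hasFDerivWithinAt_nonneg hg.hasFDerivAt.hasFDerivWithinAt hcone
  nlinarith

theorem exists_hasDerivAt_eq_zero_of_lt_of_deriv_pos {g g' : ℝ → ℝ} {a b : ℝ} (hab : a < b)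
    (hgc : ContinuousOn g (Icc a b)) (hg : ∀ x ∈ Ioc a b, HasDerivAt g (g' x) x)
    (hlt : g b < g a) (hpos : 0 < g' b) : ∃ c ∈ Ioo a b, g' c = 0 := by
  obtain ⟨c, hc, hmin⟩ := isCompact_Icc.exists_isMinOn (nonempty_Icc.2 hab.le) hgc
  have hca : c ≠ a := by
    rintro rfl
    exact (hmin (right_mem_Icc.2 hab.le)).not_gt hlt
  have hcb : c ≠ b := by
    rintro rfl
    exact (hmin.hasDerivAt_nonpos_of_right_endpoint hab (hg c ⟨hab, le_rfl⟩)).not_gt hpos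
  have hc' : c ∈ Ioo a b := ⟨lt_of_le_of_ne hc.1 hca.symm, lt_of_le_of_ne hc.2 hcb⟩
  exact ⟨c, hc', (hmin.isLocalMin (Icc_mem_nhds hc'.1 hc'.2)).hasDerivAt_eq_zero
    (hg c (Ioo_subset_Ioc_self hc'))⟩

theorem exists_hasDerivAt_eq_slope_left_of_deriv_eq {F F' : ℝ → ℝ} {a b : ℝ}
    (hab : a < b) (hF : ∀ x ∈ Icc a b, HasDerivAt F (F' x) x) (hF' : F' a = F' b) :
    ∃ η ∈ Ioo a b, F' η = slope F a η := by
  set g := Function.update (slope F a) a (F' a)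
  have hg_of_ne : ∀ x ≠ a, g x = slope F a x := fun x hx => Function.update_of_ne hx _ _
  have hg_deriv : ∀ x ∈ Ioc a b, HasDerivAt g ((x - a)⁻¹ * (F' x - g x)) x := by
    intro x hx
    have hxa : x - a ≠ 0 := sub_ne_zero.2 hx.1.ne'
    have hquot : HasDerivAt (fun y => (F y - F a) / (y - a))
        ((F' x * (x - a) - (F x - F a) * 1) / (x - a) ^ 2) x :=
      ((hF x (Ioc_subset_Icc_self hx)).sub_const (F a)).div
        ((hasDerivAt_id x).sub_const a) hxa
    have hev : g =ᶠ[𝓝 x] fun y => (F y - F a) / (y - a) := by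
      filter_upwards [eventually_ne_nhds hx.1.ne'] with y hy
      rw [hg_of_ne y hy, slope_def_field]
    refine (hquot.congr_of_eventuallyEq hev).congr_deriv ?_
    rw [hg_of_ne x hx.1.ne', slope_def_field]
    field_simp
  have hg_cont : ContinuousOn g (Icc a b) := by
    intro x hx
    rcases hx.1.eq_or_lt with rfl | hax
    · refine ContinuousAt.continuousWithinAt ?_
      rw [continuousAt_update_same]
      exact hasDerivAt_iff_tendsto_slope.1 (hF a (left_mem_Icc.2 hab.le))
    · exact (hg_deriv x ⟨hax, hx.2⟩).continuousAt.continuousWithinAt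
  obtain ⟨η, hη, hη0⟩ : ∃ η ∈ Ioo a b, (η - a)⁻¹ * (F' η - g η) = 0 := by
    have hga : g a = F' a := Function.update_self _ _ _
    rcases lt_trichotomy (g a) (g b) with hlt | heq | hgt
    · obtain ⟨η, hη, hη0⟩ := exists_hasDerivAt_eq_zero_of_lt_of_deriv_pos hab hg_cont.neg
        (fun x hx => (hg_deriv x hx).neg) (neg_lt_neg hlt) <| by
          rw [neg_pos, ← hF', ← hga]
          exact mul_neg_of_pos_of_neg (inv_pos.2 (sub_pos.2 hab)) (sub_neg.2 hlt)
      exact ⟨η, hη, neg_eq_zero.1 hη0⟩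
    · exact exists_hasDerivAt_eq_zero hab hg_cont heq
        fun x hx => hg_deriv x (Ioo_subset_Ioc_self hx)
    · refine exists_hasDerivAt_eq_zero_of_lt_of_deriv_pos hab hg_cont hg_deriv hgt ?_
      rw [← hF', ← hga]
      exact mul_pos (inv_pos.2 (sub_pos.2 hab)) (sub_pos.2 hgt)
  refine ⟨η, hη, ?_⟩
  rw [← hg_of_ne η hη.1.ne']
  exact sub_eq_zero.1 <| (mul_eq_zero.1 hη0).resolve_left (inv_ne_zero (sub_ne_zero.2 hη.1.ne'))

open intervalIntegral in
/-- **Wayment's theorem** (integral Flett's mean value theorem). If `f` is continuous on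
`[a,b]` and `f(a) = f(b)`, then there exists `η ∈ (a,b)` with
`f(η) = (1/(η-a)) ∫_a^η f(t) dt`. -/
theorem wayment_theorem (f : ℝ → ℝ) (a b : ℝ) (hab : a < b)
    (hfc : ContinuousOn f (Set.Icc a b)) (hends : f a = f b) :
    ∃ η ∈ Set.Ioo a b, f η = (1 / (η - a)) * ∫ t in a..η, f t := by
  set g := IccExtend hab.le ((Icc a b).domRestrict f)
  have hg : Continuous g := continuous_IccExtend_iff.2 hfc.domRestrict
  have hgf : EqOn g f (Icc a b) := fun x hx => IccExtend_of_mem _ _ hx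
  obtain ⟨η, hη, hflett⟩ := exists_hasDerivAt_eq_slope_left_of_deriv_eq
    (F := fun x => ∫ t in a..x, g t) hab
    (fun x _ => (hg.integral_hasStrictDerivAt a x).hasDerivAt)
    (by rw [hgf (left_mem_Icc.2 hab.le), hgf (right_mem_Icc.2 hab.le), hends])
  have hgf_η : EqOn g f (uIcc a η) := by
    rw [uIcc_of_le hη.1.le]
    exact hgf.mono (Icc_subset_Icc_right hη.2.le)
  refine ⟨η, hη, ?_⟩
  rw [← hgf_η right_mem_uIcc, hflett, slope_def_field, integral_same, sub_zero,
    ← integral_congr hgf_η]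
  ring
end

section
/- Integral Trahan-type theorem: If f : ℝ → ℝ is continuous on the closed interval [a,b] (with a < b) and (f(a) - I_f(a,b)) · (f(b) - I_f(a,b)) ≥ 0, then there exists a point η ∈ (a,b] such that f(η) = (1/(η-a)) · ∫_a^η f(t) dt. -/
/-!
Put `φ(x) = I_f(a, x)` for `x ∈ (a, b]`. Then `φ(x) → f(a)` as `x → a⁺` and
`φ'(x) = (f(x) - φ(x)) / (x - a)`. If `f ≠ φ` throughout `(a, b]`, the intermediate value theorem
gives `f - φ` a constant sign there, so `φ` is strictly monotone in the corresponding direction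
and `f(a) - φ(b)`, `f(b) - φ(b)` have strictly opposite signs, contradicting the hypothesis.
-/

open Set Filter Topology MeasureTheory

noncomputable def integralMean (f : ℝ → ℝ) (x y : ℝ) : ℝ := (1 / (y - x)) * ∫ t in x..y, f t

lemma integralMean_neg (f : ℝ → ℝ) (x y : ℝ) : integralMean (-f) x y = -integralMean f x y := by
  simp [integralMean, intervalIntegral.integral_neg]

section

variable {f : ℝ → ℝ} {a b : ℝ}

lemma continuousOn_integralMean (hab : a ≤ b) (hf : ContinuousOn f (Icc a b)) :
    ContinuousOn (integralMean f a) (Ioc a b) := by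
  rw [← uIcc_of_le hab] at hf
  have hF := intervalIntegral.continuousOn_primitive_interval (μ := volume)
    (hf.integrableOn_compact isCompact_uIcc)
  rw [uIcc_of_le hab] at hF
  refine ContinuousOn.mul ?_ (hF.mono Ioc_subset_Icc_self)
  exact continuousOn_const.div (continuousOn_id.sub continuousOn_const)
    fun x hx => (sub_pos.2 hx.1).ne'

lemma hasDerivAt_integralMean {x : ℝ} (hf : ContinuousOn f (Icc a b)) (hx : x ∈ Ioo a b) :
    HasDerivAt (integralMean f a) ((f x - integralMean f a x) / (x - a)) x := by
  have hxa : x - a ≠ 0 := (sub_pos.2 hx.1).ne'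
  have hF : HasDerivAt (fun u => ∫ t in a..u, f t) (f x) x :=
    intervalIntegral.integral_hasDerivAt_right
      ((hf.mono (uIcc_of_le hx.1.le ▸ Icc_subset_Icc_right hx.2.le)).intervalIntegrable)
      ((hf.mono Ioo_subset_Icc_self).stronglyMeasurableAtFilter isOpen_Ioo x hx)
      (hf.continuousAt (Icc_mem_nhds hx.1 hx.2))
  have hinv : HasDerivAt (fun u => 1 / (u - a)) (-1 / (x - a) ^ 2) x := by
    simpa [one_div] using ((hasDerivAt_id x).sub_const a).fun_inv hxa
  refine (hinv.mul hF).congr_deriv ?_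
  simp only [integralMean]
  field_simp
  ring

lemma tendsto_integralMean_nhdsGT (hab : a < b) (hf : ContinuousOn f (Icc a b)) :
    Tendsto (integralMean f a) (𝓝[>] a) (𝓝 (f a)) := by
  have hIcc : Icc a b ∈ 𝓝[>] a :=
    mem_of_superset (Ioo_mem_nhdsGT hab) Ioo_subset_Icc_self
  have hF : HasDerivWithinAt (fun u => ∫ t in a..u, f t) (f a) (Ici a) a :=
    intervalIntegral.integral_hasDerivWithinAt_right (t := Ioi a) IntervalIntegrable.refl
      ((hf.stronglyMeasurableAtFilter_nhdsWithin measurableSet_Icc a).filter_mono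
        (nhdsWithin_le_of_mem hIcc))
      ((hf.continuousWithinAt (left_mem_Icc.2 hab.le)).mono_of_mem_nhdsWithin hIcc)
  rw [hasDerivWithinAt_iff_tendsto_slope, Ici_sdiff_left] at hF
  refine hF.congr fun x => ?_
  simp [slope_def_field, integralMean, div_eq_inv_mul]

lemma lt_integralMean_of_forall_integralMean_lt (hab : a < b) (hf : ContinuousOn f (Icc a b))
    (h : ∀ x ∈ Ioo a b, integralMean f a x < f x) : f a < integralMean f a b := by
  have hmono : StrictMonoOn (integralMean f a) (Ioc a b) := by
    refine strictMonoOn_of_hasDerivWithinAt_pos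
      (f' := fun x => (f x - integralMean f a x) / (x - a)) (convex_Ioc a b)
      (continuousOn_integralMean hab.le hf) (fun x hx => ?_) fun x hx => ?_ <;>
      rw [interior_Ioc] at hx
    · exact (hasDerivAt_integralMean hf hx).hasDerivWithinAt
    · exact div_pos (sub_pos.2 (h x hx)) (sub_pos.2 hx.1)
  obtain ⟨m, ham, hmb⟩ := exists_between hab
  have hfa : f a ≤ integralMean f a m := by
    refine le_of_tendsto (tendsto_integralMean_nhdsGT hab hf) ?_
    filter_upwards [Ioo_mem_nhdsGT ham] with x hx
    exact (hmono ⟨hx.1, (hx.2.trans hmb).le⟩ ⟨ham, hmb.le⟩ hx.2).le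
  exact hfa.trans_lt (hmono ⟨ham, hmb.le⟩ ⟨hab, le_rfl⟩ hmb)

lemma integralMean_lt_of_forall_lt_integralMean (hab : a < b) (hf : ContinuousOn f (Icc a b))
    (h : ∀ x ∈ Ioo a b, f x < integralMean f a x) : integralMean f a b < f a := by
  have := lt_integralMean_of_forall_integralMean_lt hab hf.neg fun x hx => by
    simpa [integralMean_neg] using h x hx
  simpa [integralMean_neg] using this

end

open intervalIntegral in
/-- **Integral Trahan-type theorem.** If `f` is continuous on `[a,b]` and
`(f(a) - I_f(a,b))·(f(b) - I_f(a,b)) ≥ 0`, where `I_f(a,b) = (1/(b-a)) ∫_a^b f(t) dt`,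
then there exists `η ∈ (a,b]` with `f(η) = (1/(η-a)) ∫_a^η f(t) dt`. -/
theorem integral_trahan_theorem (f : ℝ → ℝ) (a b : ℝ) (hab : a < b)
    (hfc : ContinuousOn f (Set.Icc a b))
    (hcond : (f a - (1 / (b - a)) * ∫ t in a..b, f t) *
        (f b - (1 / (b - a)) * ∫ t in a..b, f t) ≥ 0) :
    ∃ η ∈ Set.Ioc a b, f η = (1 / (η - a)) * ∫ t in a..η, f t := by
  change 0 ≤ (f a - integralMean f a b) * (f b - integralMean f a b) at hcond
  by_contra! hne
  change ∀ η ∈ Ioc a b, f η ≠ integralMean f a η at hne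
  have hsign : ∀ x ∈ Ioc a b, ∀ y ∈ Ioc a b, f x ≤ integralMean f a x →
      integralMean f a y ≤ f y → False := fun x hx y hy hxy hyx =>
    let ⟨η, hη, hfη⟩ := isPreconnected_Ioc.intermediate_value₂ hx hy
      (hfc.mono Ioc_subset_Icc_self) (continuousOn_integralMean hab.le hfc) hxy hyx
    hne η hη hfη
  have hb : b ∈ Ioc a b := ⟨hab, le_rfl⟩
  rcases (hne b hb).lt_or_gt with hfb | hfb
  · have hfa := integralMean_lt_of_forall_lt_integralMean hab hfc fun x hx =>
      lt_of_not_ge fun h => hsign b hb x (Ioo_subset_Ioc_self hx) hfb.le h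
    exact hcond.not_gt (mul_neg_of_pos_of_neg (sub_pos.2 hfa) (sub_neg.2 hfb))
  · have hfa := lt_integralMean_of_forall_integralMean_lt hab hfc fun x hx =>
      lt_of_not_ge fun h => hsign x (Ioo_subset_Ioc_self hx) b hb h hfb.le
    exact hcond.not_gt (mul_neg_of_neg_of_pos (sub_neg.2 hfa) (sub_pos.2 hfb))
end

section
/- Pawlikowska's theorem: Let n be a positive integer and let f : ℝ → ℝ be n-times differentiable at every point of the closed interval [a,b] (with a < b). If f^{(n)}(a) = f^{(n)}(b), then there exists a point η ∈ (a,b) such that (f(η) - f(a))/(η - a) = Σ_{i=1}^{n} ((-1)^{i+1}/i!) · (η-a)^{i-1} · f^{(i)}(η); equivalently, f(a) = T_n(f,η)(a). -/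
/-!
Let `P` be the Taylor polynomial of `f` of degree `n` at `a`. Expanding the remainder `f - P`
around a moving centre `x` and evaluating at `a` gives
`G(x) = T_{n-1}(f - P, x)(a) = T_{n-1}(f, x)(a) - f(a) + (a - x)ⁿ/n! · f⁽ⁿ⁾(a)`.
By Peano's form of Taylor's theorem `G(x) = o((x - a)ⁿ)`, and the Taylor sums telescope to
`G'(x) = (a - x)ⁿ⁻¹/(n-1)! · (f⁽ⁿ⁾(x) - f⁽ⁿ⁾(a))`, which vanishes at `b`. Flett's argument applied to
`G(x)/(x - a)ⁿ` (continuous on `[a, b]`, zero at `a`, with one-sided derivative at `b` pointing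
back towards its value at `a`) yields an interior critical point `η`, that is
`(η - a) G'(η) = n G(η)`, and this rearranges to `f(a) = T_n(f, η)(a)`.
-/

open Set Filter Topology Asymptotics Finset
open scoped Nat

/-- With `c k = f⁽ᵏ⁾(x₀)`, `taylorSum c (n + 1) (x - x₀)` is the Taylor polynomial
`T_n(f, x₀)(x)`. -/
noncomputable def taylorSum (c : ℕ → ℝ) (N : ℕ) (h : ℝ) : ℝ :=
  ∑ j ∈ range N, h ^ j / j ! * c j

theorem taylorSum_succ (c : ℕ → ℝ) (N : ℕ) (h : ℝ) :
    taylorSum c (N + 1) h = taylorSum c N h + h ^ N / N ! * c N :=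
  sum_range_succ _ _

theorem taylorSum_succ' (c : ℕ → ℝ) (N : ℕ) (h : ℝ) :
    taylorSum c (N + 1) h = c 0 + ∑ j ∈ range N, h ^ (j + 1) / (j + 1)! * c (j + 1) := by
  rw [taylorSum, sum_range_succ', add_comm]
  simp

theorem taylorSum_zero_right (c : ℕ → ℝ) (N : ℕ) :
    taylorSum c (N + 1) 0 = c 0 := by
  simp [taylorSum_succ']

theorem taylorSum_sub (c d : ℕ → ℝ) (N : ℕ) (h : ℝ) :
    taylorSum (fun j ↦ c j - d j) N h = taylorSum c N h - taylorSum d N h := by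
  simp only [taylorSum, mul_sub, sum_sub_distrib]

theorem sum_Icc_mul_eq_sub_taylorSum (c : ℕ → ℝ) (n : ℕ) (h : ℝ) :
    (∑ i ∈ Icc 1 n, (-1 : ℝ) ^ (i + 1) / i ! * h ^ (i - 1) * c i) * h
      = c 0 - taylorSum c (n + 1) (-h) := by
  induction n with
  | zero => simp [taylorSum]
  | succ n ih =>
    rw [sum_Icc_succ_top (by omega), add_mul, ih, taylorSum_succ _ (n + 1), Nat.add_sub_cancel,
      neg_pow h]
    ring

theorem hasDerivAt_taylorSum (c : ℕ → ℝ) (N : ℕ) (h : ℝ) :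
    HasDerivAt (taylorSum c N) (taylorSum (fun j ↦ c (j + 1)) (N - 1) h) h := by
  cases N with
  | zero =>
    rw [show taylorSum c 0 = fun _ ↦ 0 from funext fun _ ↦ sum_range_zero _]
    exact hasDerivAt_const h 0
  | succ N =>
    have hterm (j : ℕ) : HasDerivAt (fun h : ℝ ↦ h ^ (j + 1) / (j + 1)! * c (j + 1))
        (h ^ j / j ! * c (j + 1)) h := by
      refine (((hasDerivAt_pow (j + 1) h).div_const ((j + 1)! : ℝ)).mul_const _).congr_deriv ?_
      rw [Nat.factorial_succ]
      push_cast
      field_simp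
    rw [show taylorSum c (N + 1) = _ from funext (taylorSum_succ' c N)]
    exact (HasDerivAt.fun_sum fun j (_ : j ∈ range N) ↦ hterm j).const_add (c 0)

section Chain

variable {u : ℕ → ℝ → ℝ} {s : Set ℝ} {n : ℕ}

theorem hasDerivWithinAt_taylorSum_center
    (hu : ∀ k ≤ n, ∀ x ∈ s, HasDerivWithinAt (u k) (u (k + 1) x) s x) (y : ℝ) {x : ℝ}
    (hx : x ∈ s) :
    HasDerivWithinAt (fun x ↦ taylorSum (fun k ↦ u k x) (n + 1) (y - x))
      ((y - x) ^ n / n ! * u (n + 1) x) s x := by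
  induction n with
  | zero => simpa [taylorSum_succ'] using hu 0 le_rfl x hx
  | succ n ih =>
    have hmon : HasDerivAt (fun x ↦ (y - x) ^ (n + 1) / (n + 1)!) (-((y - x) ^ n / n !)) x := by
      refine (((hasDerivAt_id' x).const_sub y).fun_pow (n + 1)).div_const _ |>.congr_deriv ?_
      rw [Nat.factorial_succ]
      push_cast
      field_simp
    simp_rw [taylorSum_succ _ (n + 1)]
    refine ((ih fun k hk ↦ hu k (by omega)).add
      (hmon.hasDerivWithinAt.mul (hu (n + 1) le_rfl x hx))).congr_deriv ?_
    ring

theorem taylorSum_center_eq_of_hasDerivAt {p : ℕ → ℝ → ℝ}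
    (hp : ∀ k ≤ n, ∀ x, HasDerivAt (p k) (p (k + 1) x) x) (hpn : ∀ x, p (n + 1) x = 0)
    (x y : ℝ) : taylorSum (fun k ↦ p k x) (n + 1) (y - x) = p 0 y := by
  have hderiv (x : ℝ) : HasDerivAt (fun x ↦ taylorSum (fun k ↦ p k x) (n + 1) (y - x)) 0 x := by
    simpa [hpn] using (hasDerivWithinAt_taylorSum_center (s := univ)
      (fun k hk x _ ↦ (hp k hk x).hasDerivWithinAt) y (mem_univ x)).hasDerivAt univ_mem
  rw [is_const_of_deriv_eq_zero (fun x ↦ (hderiv x).differentiableAt) (fun x ↦ (hderiv x).deriv)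
    x y, sub_self, taylorSum_zero_right]

/-- Unlike `taylor_isLittleO`, this needs the top derivative only to exist, not to be continuous. -/
theorem isLittleO_sub_taylorSum {a : ℝ} (hs : Convex ℝ s) (ha : a ∈ s)
    (hu : ∀ k ≤ n, ∀ x ∈ s, HasDerivWithinAt (u k) (u (k + 1) x) s x) :
    (fun x ↦ u 0 x - taylorSum (fun j ↦ u j a) (n + 2) (x - a))
      =o[𝓝[s] a] fun x ↦ (x - a) ^ (n + 1) := by
  induction n generalizing u with
  | zero =>
    simpa [taylorSum_succ', sub_sub, mul_comm] using
      hasDerivWithinAt_iff_isLittleO.1 (hu 0 le_rfl a ha)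
  | succ n ih =>
    have hder (x : ℝ) (hx : x ∈ s) : HasDerivWithinAt
        (fun x ↦ u 0 x - taylorSum (fun j ↦ u j a) (n + 3) (x - a))
        (u 1 x - taylorSum (fun j ↦ u (j + 1) a) (n + 2) (x - a)) s x :=
      (hu 0 (by omega) x hx).sub
        ((hasDerivAt_taylorSum _ _ _).comp_sub_const x a).hasDerivWithinAt
    simpa [taylorSum_zero_right] using
      hs.isLittleO_pow_succ_real ha hder (ih fun k hk ↦ hu (k + 1) (by omega))

end Chain

/-- The `k`-th derivative of `x ↦ taylorSum c (n + 1) (x - a)`; the truncated subtraction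
`n + 1 - k` makes it vanish for `k > n`. -/
noncomputable def taylorPolyDeriv (c : ℕ → ℝ) (n : ℕ) (a : ℝ) (k : ℕ) (x : ℝ) : ℝ :=
  taylorSum (fun j ↦ c (k + j)) (n + 1 - k) (x - a)

section TaylorPolyDeriv

variable (c : ℕ → ℝ) (n : ℕ) (a : ℝ)

theorem hasDerivAt_taylorPolyDeriv (k : ℕ) (x : ℝ) :
    HasDerivAt (taylorPolyDeriv c n a k) (taylorPolyDeriv c n a (k + 1) x) x := by
  have h := (hasDerivAt_taylorSum (fun j ↦ c (k + j)) (n + 1 - k) (x - a)).comp_sub_const x a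
  rw [show n + 1 - k - 1 = n + 1 - (k + 1) by omega] at h
  unfold taylorPolyDeriv
  refine h.congr_deriv ?_
  simp only [add_assoc, add_comm 1]

theorem taylorPolyDeriv_self {k : ℕ} (hk : k ≤ n) : taylorPolyDeriv c n a k a = c k := by
  rw [taylorPolyDeriv, sub_self, show n + 1 - k = n - k + 1 by omega, taylorSum_zero_right,
    add_zero]

theorem taylorPolyDeriv_top (x : ℝ) : taylorPolyDeriv c n a n x = c n := by
  simp [taylorPolyDeriv, taylorSum]

theorem taylorPolyDeriv_of_lt {k : ℕ} (hk : n < k) (x : ℝ) : taylorPolyDeriv c n a k x = 0 := by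
  rw [taylorPolyDeriv, show n + 1 - k = 0 by omega, taylorSum, sum_range_zero]

end TaylorPolyDeriv

theorem isLittleO_sub_taylorPolyDeriv {u : ℕ → ℝ → ℝ} {s : Set ℝ} {n k : ℕ} {a : ℝ}
    (hs : Convex ℝ s) (ha : a ∈ s)
    (hu : ∀ k < n, ∀ x ∈ s, HasDerivWithinAt (u k) (u (k + 1) x) s x) (hk : k < n) :
    (fun x ↦ u k x - taylorPolyDeriv (fun j ↦ u j a) n a k x)
      =o[𝓝[s] a] fun x ↦ (x - a) ^ (n - k) := by
  obtain ⟨l, rfl⟩ := Nat.exists_eq_add_of_lt hk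
  have := isLittleO_sub_taylorSum (u := fun j ↦ u (k + j)) (n := l) hs ha
    fun j hj ↦ hu (k + j) (by omega)
  rw [show k + l + 1 - k = l + 1 by omega]
  refine this.congr_left fun x ↦ ?_
  simp only [taylorPolyDeriv, add_zero, show k + l + 1 + 1 - k = l + 2 by omega]

section MeanValue

variable {a b : ℝ}

theorem exists_isLocalMax_Ioo_of_hasDerivWithinAt_right_neg {f : ℝ → ℝ} {d : ℝ} (hab : a < b)
    (hf : ContinuousOn f (Icc a b)) (hlt : f a < f b)
    (hb : HasDerivWithinAt f d (Icc a b) b) (hd : d < 0) :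
    ∃ c ∈ Ioo a b, IsLocalMax f c := by
  obtain ⟨c, hc, hmax⟩ := isCompact_Icc.exists_isMaxOn (nonempty_Icc.2 hab.le) hf
  have hca : c ≠ a := by
    rintro rfl
    exact (hmax (right_mem_Icc.2 hab.le)).not_gt hlt
  have hcb : c ≠ b := by
    rintro rfl
    have hcone : a - c ∈ posTangentConeAt (Icc a c) c :=
      sub_mem_posTangentConeAt_of_segment_subset (by rw [segment_symm, segment_eq_Icc hab.le])
    have := hmax.localize.hasFDerivWithinAt_nonpos hb hcone
    rw [ContinuousLinearMap.toSpanSingleton_apply, smul_eq_mul] at this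
    nlinarith
  have hcIoo : c ∈ Ioo a b := ⟨lt_of_le_of_ne hc.1 hca.symm, lt_of_le_of_ne hc.2 hcb⟩
  exact ⟨c, hcIoo, hmax.isLocalMax (Icc_mem_nhds hcIoo.1 hcIoo.2)⟩

theorem exists_isLocalExtr_Ioo_of_hasDerivWithinAt_right {f : ℝ → ℝ} {k : ℝ} (hab : a < b)
    (hf : ContinuousOn f (Icc a b)) (hk : 0 < k)
    (hb : HasDerivWithinAt f (k * (f a - f b)) (Icc a b) b) :
    ∃ c ∈ Ioo a b, IsLocalExtr f c := by
  rcases lt_trichotomy (f a) (f b) with hlt | heq | hgt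
  · obtain ⟨c, hc, hmax⟩ := exists_isLocalMax_Ioo_of_hasDerivWithinAt_right_neg hab hf hlt hb
      (mul_neg_of_pos_of_neg hk (sub_neg.2 hlt))
    exact ⟨c, hc, .inr hmax⟩
  · exact exists_isLocalExtr_Ioo hab hf heq
  · obtain ⟨c, hc, hmax⟩ := exists_isLocalMax_Ioo_of_hasDerivWithinAt_right_neg hab hf.neg
      (neg_lt_neg hgt) hb.neg (by nlinarith)
    have hmin : IsLocalMin f c := by simpa using hmax.neg
    exact ⟨c, hc, .inl hmin⟩

/-- Flett's mean value theorem, for `h` vanishing to order `n` at `a`. -/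
theorem exists_sub_mul_eq_of_isLittleO_pow {h h' : ℝ → ℝ} {n : ℕ} (hn : n ≠ 0) (hab : a < b)
    (hh : ∀ x ∈ Icc a b, HasDerivWithinAt h (h' x) (Icc a b) x)
    (ho : h =o[𝓝[Icc a b] a] fun x ↦ (x - a) ^ n) (hb : h' b = 0) :
    ∃ η ∈ Ioo a b, (η - a) * h' η = n * h η := by
  obtain ⟨m, rfl⟩ := Nat.exists_eq_add_one_of_ne_zero hn
  set q : ℝ → ℝ := fun x ↦ h x / (x - a) ^ (m + 1) with hq
  have hqa : q a = 0 := by simp [hq]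
  have hq' : ∀ x ∈ Icc a b, x ≠ a → HasDerivWithinAt q
      (((x - a) * h' x - (m + 1) * h x) / (x - a) ^ (m + 2)) (Icc a b) x := by
    intro x hx hxa
    have hxa' : x - a ≠ 0 := sub_ne_zero.2 hxa
    have hpow : HasDerivAt (fun x ↦ (x - a) ^ (m + 1)) ((m + 1 : ℕ) * (x - a) ^ m) x := by
      simpa using ((hasDerivAt_id x).sub_const a).fun_pow (m + 1)
    refine ((hh x hx).div hpow.hasDerivWithinAt (pow_ne_zero _ hxa')).congr_deriv ?_
    push_cast
    field_simp
    ring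
  -- `q a = 0` is the junk value `h a / 0`; continuity there is exactly the little-o hypothesis.
  have hcont : ContinuousOn q (Icc a b) := by
    intro x hx
    rcases eq_or_ne x a with rfl | hxa
    · rw [ContinuousWithinAt, hqa]
      exact ho.tendsto_div_nhds_zero
    · exact (hq' x hx hxa).continuousWithinAt
  have hba : 0 < b - a := sub_pos.2 hab
  have hqb : HasDerivWithinAt q ((m + 1) / (b - a) * (q a - q b)) (Icc a b) b := by
    refine (hq' b (right_mem_Icc.2 hab.le) hab.ne').congr_deriv ?_
    rw [hqa, hb, hq]
    field_simp
    ring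
  obtain ⟨η, hη, hext⟩ :=
    exists_isLocalExtr_Ioo_of_hasDerivWithinAt_right hab hcont (by positivity) hqb
  have hηa : η - a ≠ 0 := sub_ne_zero.2 hη.1.ne'
  have hzero := hext.hasDerivAt_eq_zero
    ((hq' η (Ioo_subset_Icc_self hη) hη.1.ne').hasDerivAt (Icc_mem_nhds hη.1 hη.2))
  rw [div_eq_zero_iff, or_iff_left (pow_ne_zero _ hηa), sub_eq_zero] at hzero
  exact ⟨η, hη, by push_cast; exact hzero⟩

theorem exists_eq_taylorSum_center_of_eq {u : ℕ → ℝ → ℝ} {n : ℕ} (hn : n ≠ 0) (hab : a < b)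
    (hu : ∀ k < n, ∀ x ∈ Icc a b, HasDerivWithinAt (u k) (u (k + 1) x) (Icc a b) x)
    (hends : u n a = u n b) :
    ∃ η ∈ Ioo a b, u 0 a = taylorSum (fun k ↦ u k η) (n + 1) (a - η) := by
  obtain ⟨m, rfl⟩ := Nat.exists_eq_add_one_of_ne_zero hn
  set P := taylorPolyDeriv (fun j ↦ u j a) (m + 1) a
  set R : ℕ → ℝ → ℝ := fun k x ↦ u k x - P k x
  set G : ℝ → ℝ := fun x ↦ taylorSum (fun k ↦ R k x) (m + 1) (a - x)
  have hR (k : ℕ) (hk : k ≤ m) (x : ℝ) (hx : x ∈ Icc a b) :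
      HasDerivWithinAt (R k) (R (k + 1) x) (Icc a b) x :=
    (hu k (by omega) x hx).sub (hasDerivAt_taylorPolyDeriv _ _ _ k x).hasDerivWithinAt
  have hGo : G =o[𝓝[Icc a b] a] fun x ↦ (x - a) ^ (m + 1) := by
    refine IsLittleO.fun_sum fun k hk ↦ ?_
    have hkm : k ≤ m := Nat.lt_succ_iff.1 (mem_range.1 hk)
    have hpow : (fun x ↦ (a - x) ^ k / k !) =O[𝓝[Icc a b] a] fun x ↦ (x - a) ^ k :=
      ((isBigO_refl _ _).const_mul_left ((-1) ^ k / k ! : ℝ)).congr_left fun x ↦ by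
        rw [show a - x = -(x - a) by ring, neg_pow (x - a)]
        ring
    refine (hpow.mul_isLittleO (isLittleO_sub_taylorPolyDeriv (convex_Icc a b)
      (left_mem_Icc.2 hab.le) hu (Nat.lt_succ_of_le hkm))).congr_right fun x ↦ ?_
    rw [← pow_add, Nat.add_sub_cancel' (by omega)]
  have hRb : (a - b) ^ m / m ! * R (m + 1) b = 0 := by
    simp [R, P, taylorPolyDeriv_top, hends]
  obtain ⟨η, hη, hflett⟩ := exists_sub_mul_eq_of_isLittleO_pow m.succ_ne_zero hab
    (fun x hx ↦ hasDerivWithinAt_taylorSum_center hR a hx) hGo hRb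
  have hP : taylorSum (fun k ↦ P k η) (m + 2) (a - η) = u 0 a := by
    rw [taylorSum_center_eq_of_hasDerivAt (fun k _ x ↦ hasDerivAt_taylorPolyDeriv _ _ _ k x)
      (taylorPolyDeriv_of_lt _ _ _ (by omega)), taylorPolyDeriv_self _ _ _ (Nat.zero_le _)]
  refine ⟨η, hη, ?_⟩
  have hPtop : P (m + 1) η = u (m + 1) a := taylorPolyDeriv_top _ _ _ _
  simp only [R, taylorSum_sub, hPtop] at hflett
  rw [taylorSum_succ, hPtop] at hP
  rw [taylorSum_succ, ← hP, Nat.factorial_succ]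
  push_cast at hflett ⊢
  field_simp at hflett ⊢
  linear_combination hflett

end MeanValue

/-- **Pawlikowska's theorem.** Let `f` be `n`-times differentiable at every point of
`[a,b]` (one-sidedly at the endpoints), where the iterated derivatives are taken within
`[a,b]`. If `f⁽ⁿ⁾(a) = f⁽ⁿ⁾(b)`, then there exists `η ∈ (a,b)` with
`(f(η) - f(a))/(η - a) = ∑_{i=1}^{n} ((-1)^{i+1}/i!)·(η-a)^{i-1}·f⁽ⁱ⁾(η)`. -/
theorem pawlikowska_theorem (f : ℝ → ℝ) (a b : ℝ) (n : ℕ) (hn : 1 ≤ n) (hab : a < b)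
    (hf : ∀ i < n, ∀ x ∈ Set.Icc a b,
      DifferentiableWithinAt ℝ (iteratedDerivWithin i f (Set.Icc a b)) (Set.Icc a b) x)
    (hends : iteratedDerivWithin n f (Set.Icc a b) a = iteratedDerivWithin n f (Set.Icc a b) b) :
    ∃ η ∈ Set.Ioo a b, (f η - f a) / (η - a) =
      ∑ i ∈ Finset.Icc 1 n, (-1 : ℝ) ^ (i + 1) / (Nat.factorial i) * (η - a) ^ (i - 1) *
        iteratedDerivWithin i f (Set.Icc a b) η := by
  have hu (k : ℕ) (hk : k < n) (x : ℝ) (hx : x ∈ Icc a b) :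
      HasDerivWithinAt (iteratedDerivWithin k f (Icc a b))
        (iteratedDerivWithin (k + 1) f (Icc a b) x) (Icc a b) x := by
    rw [iteratedDerivWithin_succ]
    exact (hf k hk x hx).hasDerivWithinAt
  obtain ⟨η, hη, hfa⟩ := exists_eq_taylorSum_center_of_eq (by omega) hab hu hends
  refine ⟨η, hη, ?_⟩
  rw [div_eq_iff (sub_ne_zero.2 hη.1.ne'), sum_Icc_mul_eq_sub_taylorSum, neg_sub, ← hfa,
    iteratedDerivWithin_zero]
end

section
/- Pawlikowska's theorem without boundary condition: Let n be a positive integer and let f : ℝ → ℝ be n-times differentiable at every point of the closed interval [a,b] (with a < b). Then there exists a point η ∈ (a,b) such that f(a) = T_n(f,η)(a) + ((a-η)^{n+1}/(n+1)!) · (f^{(n)}(b) - f^{(n)}(a))/(b - a). -/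
/-!
Write `n = m + 1`, `D i = f⁽ⁱ⁾` (derivatives within `[a, b]`), `C` for the difference quotient of
`D n` over `[a, b]`, and `H x = f a - T_n(f,x)(a) - C (a - x)^(n+1)/(n+1)!` for the defect that
has to vanish at `η`. The quotient
`g x = (f a - T_m(f,x)(a) + n C (a - x)^(n+1)/(n+1)!) / (a - x)^n`
(`pawlikowskaQuotient`) has derivative `n H x / (a - x)^(n+1)`, so it suffices to find a critical
point of `g` in `(a, b)`.
Expanding the Taylor polynomial in its base point gives `g x → D n a / n!` as `x → a⁺`, although
`D n` need not be continuous, and the value of `C` is exactly what makes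
`g' b = -(n / (b - a)) (g b - D n a / n!)`: at `b`, `g` heads back towards its limit at `a`.
Hence the continuous extension of `g` to `[a, b]` has an extremum in `(a, b)` (or satisfies
Rolle's hypothesis), and there `g' = 0`.
-/

open Set Filter Asymptotics
open scoped Topology Nat

theorem isTheta_const_sub_pow_sub_pow (a : ℝ) (n : ℕ) (l : Filter ℝ) :
    (fun x => (a - x) ^ n) =Θ[l] fun x => (x - a) ^ n :=
  .of_norm_eventuallyEq_norm <| .of_forall fun x => by simp only [norm_pow, norm_sub_rev]

theorem sub_taylorWithinEval_basepoint_isLittleO {E : Type*} [NormedAddCommGroup E]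
    [NormedSpace ℝ E] {f : ℝ → E} {s : Set ℝ} {a : ℝ} {n : ℕ} (hs : Convex ℝ s)
    (hs' : UniqueDiffOn ℝ s) (ha : a ∈ s) (hf : ContDiffOn ℝ n f s)
    (hfa : DifferentiableWithinAt ℝ (iteratedDerivWithin n f s) s a) :
    (fun x => f a - taylorWithinEval f n s x a
        - (((n + 1)! : ℝ)⁻¹ * (a - x) ^ (n + 1)) • iteratedDerivWithin (n + 1) f s a)
      =o[𝓝[s] a] fun x => (x - a) ^ (n + 1) := by
  have hlin := hfa.hasDerivWithinAt
  rw [hasDerivWithinAt_iff_isLittleO, ← iteratedDerivWithin_succ] at hlin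
  cases n with
  | zero =>
    refine (hlin.neg_left.congr_left fun x => ?_).congr_right (by simp)
    simp only [iteratedDerivWithin_zero, taylor_within_zero_eval, zero_add, Nat.factorial_one,
      Nat.cast_one, inv_one, pow_one, one_mul]
    module
  | succ m =>
    set D := fun k => iteratedDerivWithin k f s
    -- Freezing the top coefficient of `T_{m+1}(f,x)(a)` at `a` leaves a function whose derivative
    -- sees `D (m + 1)` only through its first-order expansion at `a`.
    set Q := fun x => taylorWithinEval f m s x a
      + (((m + 1)! : ℝ)⁻¹ * (a - x) ^ (m + 1)) • D (m + 1) a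
      - (((m + 1 : ℝ) / (m + 2)!) * (a - x) ^ (m + 2)) • D (m + 2) a
    have hQ : ∀ x ∈ s, HasDerivWithinAt Q (((m ! : ℝ)⁻¹ * (a - x) ^ m) •
        (D (m + 1) x - D (m + 1) a - (x - a) • D (m + 2) a)) s x := by
      intro x hx
      have hT := hasDerivWithinAt_taylorWithinEval (x := a) hs' self_mem_nhdsWithin hx subset_rfl
        hf.of_succ (hf.differentiableOn_iteratedDerivWithin (by norm_cast; omega) hs' x hx)
      have hpow (k : ℕ) : HasDerivWithinAt (fun y => (a - y) ^ (k + 1))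
          (-(k + 1) * (a - x) ^ k) s x := (monomial_has_deriv_aux x a k).hasDerivWithinAt
      refine ((hT.add (((hpow m).const_mul _).smul_const _)).sub
        (((hpow (m + 1)).const_mul _).smul_const _)).congr_deriv ?_
      simp only [D, Nat.factorial_succ, Nat.cast_mul, Nat.cast_add, Nat.cast_one]
      match_scalars
      · rfl
      · field_simp
      · field_simp
        ring
    have hQo := hs.isLittleO_pow_succ_real ha hQ <| by
      simpa [← pow_succ] using ((isTheta_const_sub_pow_sub_pow a m _).isBigO.const_mul_left
        (m ! : ℝ)⁻¹).smul_isLittleO hlin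
    have hrest := ((isTheta_const_sub_pow_sub_pow a (m + 1) _).isBigO.const_mul_left
        ((m + 1)! : ℝ)⁻¹).smul_isLittleO hlin
    refine (hQo.neg_left.sub hrest).congr' (Eventually.of_forall fun x => ?_) (by simp [pow_succ])
    simp only [Q, D, taylorWithinEval_self, taylorWithinEval_succ, sub_self, Nat.factorial_succ,
      Nat.cast_mul, Nat.cast_add, Nat.cast_one]
    match_scalars <;> field_simp <;> ring

theorem HasDerivWithinAt.div_const_sub_pow_succ {u : ℝ → ℝ} {u' a x : ℝ} {s : Set ℝ} (n : ℕ)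
    (hu : HasDerivWithinAt u u' s x) (hx : x ≠ a) :
    HasDerivWithinAt (fun y => u y / (a - y) ^ (n + 1))
      ((u' * (a - x) + (n + 1) * u x) / (a - x) ^ (n + 2)) s x := by
  have hax : a - x ≠ 0 := sub_ne_zero.2 hx.symm
  refine (hu.div (monomial_has_deriv_aux x a n).hasDerivWithinAt (pow_ne_zero _ hax)).congr_deriv ?_
  field_simp
  ring

theorem exists_hasDerivAt_eq_zero_of_lt_of_neg {g g' : ℝ → ℝ} {a b : ℝ} (hab : a < b)
    (hg : ContinuousOn g (Icc a b)) (hg' : ∀ x ∈ Ioc a b, HasDerivWithinAt g (g' x) (Icc a b) x)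
    (hlt : g a < g b) (hneg : g' b < 0) : ∃ c ∈ Ioo a b, g' c = 0 := by
  obtain ⟨c, hc, hmax⟩ := isCompact_Icc.exists_isMaxOn (nonempty_Icc.2 hab.le) hg
  have hca : a < c := hc.1.lt_of_ne <| by
    rintro rfl
    exact (hmax ⟨hab.le, le_rfl⟩).not_gt hlt
  have hcb : c < b := hc.2.lt_of_ne <| by
    rintro rfl
    have := hmax.localize.hasFDerivWithinAt_nonpos (hg' c ⟨hca, le_rfl⟩).hasFDerivWithinAt
      (sub_mem_posTangentConeAt_of_segment_subset
        ((convex_Icc a c).segment_subset hc ⟨le_rfl, hab.le⟩))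
    rw [ContinuousLinearMap.toSpanSingleton_apply, smul_eq_mul] at this
    nlinarith
  have hIcc : Icc a b ∈ 𝓝 c := Icc_mem_nhds hca hcb
  exact ⟨c, ⟨hca, hcb⟩, (hmax.isLocalMax hIcc).hasDerivAt_eq_zero
    ((hg' c ⟨hca, hcb.le⟩).hasDerivAt hIcc)⟩

theorem exists_hasDerivAt_eq_zero_of_tendsto_of_hasDerivWithinAt_right {g g' : ℝ → ℝ}
    {a b v K : ℝ} (hab : a < b) (hga : Tendsto g (𝓝[>] a) (𝓝 v))
    (hg' : ∀ x ∈ Ioc a b, HasDerivWithinAt g (g' x) (Icc a b) x)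
    (hK : 0 < K) (hgb : g' b = -K * (g b - v)) : ∃ c ∈ Ioo a b, g' c = 0 := by
  classical
  set G := Function.update g a v
  have hGa : G a = v := Function.update_self ..
  have hGb : G b = g b := Function.update_of_ne hab.ne' ..
  have hG' (x : ℝ) (hx : x ∈ Ioc a b) : HasDerivWithinAt G (g' x) (Icc a b) x :=
    (hg' x hx).congr_of_eventuallyEq
      (eventually_nhdsWithin_of_eventually_nhds <| (eventually_ne_nhds hx.1.ne').mono
        fun y hy => Function.update_of_ne hy ..)
      (Function.update_of_ne hx.1.ne' ..)
  have hG : ContinuousOn G (Icc a b) := by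
    intro x hx
    rcases hx.1.eq_or_lt with rfl | hxa
    · rw [continuousWithinAt_update_same, Icc_sdiff_left]
      exact hga.mono_left (nhdsWithin_mono _ Ioc_subset_Ioi_self)
    · exact (hG' x ⟨hxa, hx.2⟩).continuousWithinAt
  rcases lt_trichotomy (g b) v with hlt | heq | hgt
  · obtain ⟨c, hc, hc0⟩ := exists_hasDerivAt_eq_zero_of_lt_of_neg (g := fun x => -G x)
      (g' := fun x => -g' x) hab hG.neg (fun x hx => (hG' x hx).neg)
      (by simpa [hGa, hGb] using hlt) (by rw [hgb]; nlinarith)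
    exact ⟨c, hc, neg_eq_zero.1 hc0⟩
  · exact exists_hasDerivAt_eq_zero hab hG (by rw [hGa, hGb, heq])
      fun x hx => (hG' x (Ioo_subset_Ioc_self hx)).hasDerivAt (Icc_mem_nhds hx.1 hx.2)
  · exact exists_hasDerivAt_eq_zero_of_lt_of_neg hab hG hG' (by rwa [hGa, hGb])
      (by rw [hgb]; nlinarith)

noncomputable def pawlikowskaQuotient (f : ℝ → ℝ) (s : Set ℝ) (a C : ℝ) (m : ℕ) (x : ℝ) : ℝ :=
  (f a - taylorWithinEval f m s x a + (m + 1) * C / (m + 2)! * (a - x) ^ (m + 2)) /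
    (a - x) ^ (m + 1)

theorem hasDerivWithinAt_pawlikowskaQuotient {f : ℝ → ℝ} {s : Set ℝ} {a C x : ℝ} {m : ℕ}
    (hs : UniqueDiffOn ℝ s) (hx : x ∈ s) (hxa : x ≠ a) (hf : ContDiffOn ℝ m f s)
    (hfx : DifferentiableWithinAt ℝ (iteratedDerivWithin m f s) s x) :
    HasDerivWithinAt (pawlikowskaQuotient f s a C m)
      ((m + 1) * (f a - taylorWithinEval f (m + 1) s x a - C * (a - x) ^ (m + 2) / (m + 2)!) /
        (a - x) ^ (m + 2)) s x := by
  have hT := hasDerivWithinAt_taylorWithinEval (x := a) hs self_mem_nhdsWithin hx subset_rfl hf hfx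
  refine ((((hasDerivWithinAt_const x s (f a)).sub hT).add
    ((monomial_has_deriv_aux x a (m + 1)).hasDerivWithinAt.const_mul
      ((m + 1) * C / (m + 2)!))).div_const_sub_pow_succ m hxa).congr_deriv ?_
  simp only [Pi.add_apply, Pi.sub_apply, taylorWithinEval_succ, smul_eq_mul, Nat.factorial_succ,
    Nat.cast_mul, Nat.cast_add, Nat.cast_one]
  field_simp
  ring

theorem tendsto_pawlikowskaQuotient {f : ℝ → ℝ} {s : Set ℝ} {a C : ℝ} {m : ℕ}
    (hs : Convex ℝ s) (hs' : UniqueDiffOn ℝ s) (ha : a ∈ s) (hf : ContDiffOn ℝ m f s)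
    (hfa : DifferentiableWithinAt ℝ (iteratedDerivWithin m f s) s a) :
    Tendsto (pawlikowskaQuotient f s a C m) (𝓝[s \ {a}] a)
      (𝓝 (iteratedDerivWithin (m + 1) f s a / (m + 1)!)) := by
  have hrem := ((sub_taylorWithinEval_basepoint_isLittleO hs hs' ha hf hfa).trans_isTheta
    (isTheta_const_sub_pow_sub_pow a (m + 1) _).symm).tendsto_div_nhds_zero
  have hlin : Tendsto (fun x => (m + 1) * C / (m + 2)! * (a - x)) (𝓝[s] a) (𝓝 0) := by
    simpa using ((continuous_const.mul (continuous_const.sub continuous_id)).tendsto a).mono_left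
      nhdsWithin_le_nhds (f := fun x : ℝ => (m + 1) * C / (m + 2)! * (a - x))
  have := ((hrem.add hlin).const_add (iteratedDerivWithin (m + 1) f s a / (m + 1)!)).mono_left
    (nhdsWithin_mono a (sdiff_subset (t := {a})))
  rw [add_zero, add_zero] at this
  refine this.congr' (eventually_nhdsWithin_of_forall fun x hx => ?_)
  have hax : a - x ≠ 0 := sub_ne_zero.2 (Ne.symm hx.2)
  simp only [pawlikowskaQuotient, smul_eq_mul]
  field_simp
  ring

theorem pawlikowskaQuotient_boundary (f : ℝ → ℝ) (s : Set ℝ) {a b C : ℝ} (m : ℕ) (hab : a ≠ b)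
    (hC : C = (iteratedDerivWithin (m + 1) f s b - iteratedDerivWithin (m + 1) f s a) / (b - a)) :
    (m + 1) * (f a - taylorWithinEval f (m + 1) s b a - C * (a - b) ^ (m + 2) / (m + 2)!) /
        (a - b) ^ (m + 2) =
      -((m + 1) / (b - a)) * (pawlikowskaQuotient f s a C m b -
        iteratedDerivWithin (m + 1) f s a / (m + 1)!) := by
  have hab' : a - b ≠ 0 := sub_ne_zero.2 hab
  have hba : b - a ≠ 0 := sub_ne_zero.2 hab.symm
  subst hC
  simp only [pawlikowskaQuotient, taylorWithinEval_succ, smul_eq_mul, Nat.factorial_succ,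
    Nat.cast_mul, Nat.cast_add, Nat.cast_one]
  field_simp
  ring

/-- **Pawlikowska's theorem without boundary condition.** Let `f` be `n`-times
differentiable at every point of `[a,b]` (one-sidedly at the endpoints), where the
iterated derivatives are taken within `[a,b]`. Then there exists `η ∈ (a,b)` with
`f(a) = T_n(f,η)(a) + ((a-η)^{n+1}/(n+1)!)·(f⁽ⁿ⁾(b) - f⁽ⁿ⁾(a))/(b-a)`, where
`T_n(f,η)(a) = ∑_{i=0}^{n} (f⁽ⁱ⁾(η)/i!)·(a-η)^i` is the `n`-th Taylor polynomial. -/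
theorem pawlikowska_theorem_without_boundary (f : ℝ → ℝ) (a b : ℝ) (n : ℕ) (hn : 1 ≤ n)
    (hab : a < b)
    (hf : ∀ i < n, ∀ x ∈ Set.Icc a b,
      DifferentiableWithinAt ℝ (iteratedDerivWithin i f (Set.Icc a b)) (Set.Icc a b) x) :
    ∃ η ∈ Set.Ioo a b, f a =
      (∑ i ∈ Finset.range (n + 1),
        iteratedDerivWithin i f (Set.Icc a b) η / (Nat.factorial i) * (a - η) ^ i) +
      (a - η) ^ (n + 1) / (Nat.factorial (n + 1)) *
        ((iteratedDerivWithin n f (Set.Icc a b) b - iteratedDerivWithin n f (Set.Icc a b) a)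
          / (b - a)) := by
  obtain ⟨m, rfl⟩ : ∃ m, n = m + 1 := ⟨n - 1, by omega⟩
  have hs := uniqueDiffOn_Icc hab
  have hdiff (i : ℕ) (hi : i ≤ m) :
      DifferentiableOn ℝ (iteratedDerivWithin i f (Icc a b)) (Icc a b) :=
    hf i (Nat.lt_succ_of_le hi)
  have hcont : ContDiffOn ℝ m f (Icc a b) :=
    contDiffOn_of_differentiableOn_deriv fun i hi => hdiff i (by exact_mod_cast hi)
  obtain ⟨η, hη, hzero⟩ := exists_hasDerivAt_eq_zero_of_tendsto_of_hasDerivWithinAt_right hab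
    ((tendsto_pawlikowskaQuotient (convex_Icc a b) hs (left_mem_Icc.2 hab.le) hcont
      (hdiff m le_rfl a (left_mem_Icc.2 hab.le))).mono_left
        (by rw [Icc_sdiff_left, nhdsWithin_Ioc_eq_nhdsGT hab]))
    (fun x hx => hasDerivWithinAt_pawlikowskaQuotient hs (Ioc_subset_Icc_self hx) hx.1.ne' hcont
      (hdiff m le_rfl x (Ioc_subset_Icc_self hx)))
    (div_pos m.cast_add_one_pos (sub_pos.2 hab)) (pawlikowskaQuotient_boundary f _ m hab.ne rfl)
  refine ⟨η, hη, ?_⟩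
  have hηa : (a - η) ^ (m + 2) ≠ 0 := pow_ne_zero _ (sub_ne_zero.2 hη.1.ne)
  rw [div_eq_zero_iff, mul_eq_zero, or_iff_right m.cast_add_one_ne_zero, or_iff_left hηa,
    sub_eq_zero, sub_eq_iff_eq_add, taylor_within_apply] at hzero
  rw [hzero, add_comm]
  congr 1
  · exact Finset.sum_congr rfl fun i _ => by rw [smul_eq_mul]; ring
  · ring
end

section
/- Cauchy-type Pawlikowska theorem: Let n be a positive integer and let f, g : ℝ → ℝ be n-times differentiable at every point of the closed interval [a,b] (with a < b), with g^{(n)}(a) ≠ g^{(n)}(b). Then there exists a point η ∈ (a,b) such that f(a) - T_n(f,η)(a) = ((f^{(n)}(b) - f^{(n)}(a))/(g^{(n)}(b) - g^{(n)}(a))) · ( g(a) - T_n(g,η)(a) ). -/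
/-!
Write `G(x) = T_{n-1}(h, x)(a)` for the Taylor polynomial of `h` at the moving base point `x`,
evaluated at `a`; then `G' (x) = (a - x)^{n-1} h⁽ⁿ⁾(x) / (n-1)!`. If `h⁽ⁿ⁾(a) = h⁽ⁿ⁾(b) = c`, the
function `F(x) = G(x) + c (a - x)^n / n!` has `F'(b) = 0` and `F(x) - F(a) = o((x - a)^n)`, so the
quotient `(F(x) - F(a)) / (x - a)^n` is continuous on `[a, b]`, vanishes at `a`, and has at `b` a
derivative of the opposite sign to its value. It therefore has an interior critical point `η`,
and `F'(η) (η - a) = n (F(η) - F(a))` unwinds to `h(a) = T_n(h, η)(a)` (Pawlikowska's theorem).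
The Cauchy form is Pawlikowska's theorem for `(g⁽ⁿ⁾(b) - g⁽ⁿ⁾(a)) f - (f⁽ⁿ⁾(b) - f⁽ⁿ⁾(a)) g`.
-/

open Set Filter Topology Nat Asymptotics

/-- `f` is `n` times differentiable within `s`; unlike `ContDiffOn 𝕜 n f s`, the `n`-th derivative
need not be continuous. -/
def IteratedDifferentiableOn (𝕜 : Type*) [NontriviallyNormedField 𝕜] {F : Type*}
    [NormedAddCommGroup F] [NormedSpace 𝕜 F] (n : ℕ) (f : 𝕜 → F) (s : Set 𝕜) : Prop :=
  ∀ i < n, ∀ x ∈ s, DifferentiableWithinAt 𝕜 (iteratedDerivWithin i f s) s x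

namespace IteratedDifferentiableOn

section General

variable {𝕜 F : Type*} [NontriviallyNormedField 𝕜] [NormedAddCommGroup F] [NormedSpace 𝕜 F]
  {n : ℕ} {f g : 𝕜 → F} {s : Set 𝕜}

theorem of_le (hf : IteratedDifferentiableOn 𝕜 n f s) {m : ℕ} (hmn : m ≤ n) :
    IteratedDifferentiableOn 𝕜 m f s := fun i hi ↦ hf i (hi.trans_le hmn)

theorem hasDerivWithinAt (hf : IteratedDifferentiableOn 𝕜 n f s) {i : ℕ} (hi : i < n) {x : 𝕜}
    (hx : x ∈ s) :
    HasDerivWithinAt (iteratedDerivWithin i f s) (iteratedDerivWithin (i + 1) f s x) s x := by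
  rw [iteratedDerivWithin_succ]
  exact (hf i hi x hx).hasDerivWithinAt

theorem contDiffOn (hf : IteratedDifferentiableOn 𝕜 (n + 1) f s) : ContDiffOn 𝕜 n f s :=
  contDiffOn_of_differentiableOn_deriv fun i hi x hx ↦ hf i (Nat.lt_succ_of_le (mod_cast hi)) x hx

theorem iteratedDerivWithin_sub (hf : IteratedDifferentiableOn 𝕜 n f s)
    (hg : IteratedDifferentiableOn 𝕜 n g s) {i : ℕ} (hi : i ≤ n) :
    EqOn (iteratedDerivWithin i (f - g) s) (iteratedDerivWithin i f s - iteratedDerivWithin i g s)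
      s := by
  induction i with
  | zero => intro x _; simp
  | succ i ih =>
    intro x hx
    rw [iteratedDerivWithin_succ, derivWithin_congr (ih (by omega)) (ih (by omega) hx),
      iteratedDerivWithin_succ, iteratedDerivWithin_succ]
    exact derivWithin_sub (hf i hi x hx) (hg i hi x hx)

theorem sub (hf : IteratedDifferentiableOn 𝕜 n f s) (hg : IteratedDifferentiableOn 𝕜 n g s) :
    IteratedDifferentiableOn 𝕜 n (f - g) s := fun i hi x hx ↦
  ((hf i hi x hx).sub (hg i hi x hx)).congr (hf.iteratedDerivWithin_sub hg hi.le)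
    (hf.iteratedDerivWithin_sub hg hi.le hx)

theorem const_smul (hf : IteratedDifferentiableOn 𝕜 n f s) (c : 𝕜) :
    IteratedDifferentiableOn 𝕜 n (c • f) s := fun i hi x hx ↦ by
  rw [show iteratedDerivWithin i (c • f) s = c • iteratedDerivWithin i f s from
    funext fun _ ↦ iteratedDerivWithin_const_smul_field c f]
  exact (hf i hi x hx).const_smul c

end General

section Taylor

variable {E : Type*} [NormedAddCommGroup E] [NormedSpace ℝ E] {n : ℕ} {f g : ℝ → E} {s : Set ℝ}

theorem taylorWithinEval_sub (hf : IteratedDifferentiableOn ℝ n f s)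
    (hg : IteratedDifferentiableOn ℝ n g s) {x₀ : ℝ} (hx₀ : x₀ ∈ s) (x : ℝ) :
    taylorWithinEval (f - g) n s x₀ x =
      taylorWithinEval f n s x₀ x - taylorWithinEval g n s x₀ x := by
  simp only [taylor_within_apply, ← Finset.sum_sub_distrib, ← smul_sub]
  refine Finset.sum_congr rfl fun i hi ↦ ?_
  rw [hf.iteratedDerivWithin_sub hg (Nat.lt_succ_iff.1 (Finset.mem_range.1 hi)) hx₀, Pi.sub_apply]

theorem hasDerivWithinAt_taylorWithinEval (hs : UniqueDiffOn ℝ s)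
    (hf : IteratedDifferentiableOn ℝ (n + 1) f s) (x : ℝ) {y : ℝ} (hy : y ∈ s) :
    HasDerivWithinAt (fun t ↦ taylorWithinEval f n s t x)
      (((n ! : ℝ)⁻¹ * (x - y) ^ n) • iteratedDerivWithin (n + 1) f s y) s y :=
  _root_.hasDerivWithinAt_taylorWithinEval hs self_mem_nhdsWithin hy subset_rfl hf.contDiffOn
    (hf n n.lt_succ_self y hy)

end Taylor

end IteratedDifferentiableOn

theorem taylorWithinEval_const_smul {E : Type*} [NormedAddCommGroup E] [NormedSpace ℝ E]
    (c : ℝ) (f : ℝ → E) (n : ℕ) (s : Set ℝ) (x₀ x : ℝ) :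
    taylorWithinEval (c • f) n s x₀ x = c • taylorWithinEval f n s x₀ x := by
  simp only [taylor_within_apply, Finset.smul_sum, iteratedDerivWithin_const_smul_field,
    smul_comm c]

theorem isBigO_const_mul_sub_pow (l : Filter ℝ) (C a : ℝ) (j : ℕ) :
    (fun x ↦ C * (a - x) ^ j) =O[l] fun x ↦ (x - a) ^ j :=
  IsBigO.of_bound |C| (Eventually.of_forall fun x ↦ by simp [abs_sub_comm])

/-- Taylor's theorem in Peano form with the roles of the base point and the evaluation point
exchanged. Unlike `taylor_isLittleO`, it only needs `h⁽ᵐ⁺¹⁾` to exist, not to be continuous: the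
integration by parts hidden in `P` moves the derivative onto `h⁽ᵐ⁾`, which is differentiable at
`a`. -/
theorem IteratedDifferentiableOn.isLittleO_taylorWithinEval_varying_base {h : ℝ → ℝ}
    {s : Set ℝ} {a : ℝ} {m : ℕ} (hs : Convex ℝ s) (hs' : UniqueDiffOn ℝ s) (ha : a ∈ s)
    (hh : IteratedDifferentiableOn ℝ (m + 1) h s) :
    (fun x ↦ taylorWithinEval h m s x a +
        ((m + 1)! : ℝ)⁻¹ * (a - x) ^ (m + 1) * iteratedDerivWithin (m + 1) h s a - h a)
      =o[𝓝[s] a] fun x ↦ (x - a) ^ (m + 1) := by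
  cases m with
  | zero =>
    simp only [zero_add, pow_one]
    refine (hh.hasDerivWithinAt one_pos ha).isLittleO.congr_left fun x ↦ ?_
    simp only [iteratedDerivWithin_zero, taylor_within_zero_eval, smul_eq_mul, factorial_one]
    ring
  | succ k =>
    set Q := iteratedDerivWithin (k + 1) h s
    set c := iteratedDerivWithin (k + 2) h s a
    have hQ : (fun x ↦ Q x - Q a - (x - a) * c) =o[𝓝[s] a] fun x ↦ x - a :=
      (hh.hasDerivWithinAt (by omega) ha).isLittleO
    set P : ℝ → ℝ := fun x ↦ taylorWithinEval h k s x a +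
      ((k + 1)! : ℝ)⁻¹ * (a - x) ^ (k + 1) * (Q a + (x - a) * c) +
      ((k + 2)! : ℝ)⁻¹ * (a - x) ^ (k + 2) * c
    have hP : ∀ x ∈ s,
        HasDerivWithinAt P ((k ! : ℝ)⁻¹ * (a - x) ^ k * (Q x - Q a - (x - a) * c)) s x := by
      intro x hx
      have hT := (hh.of_le (m := k + 1) (by omega)).hasDerivWithinAt_taylorWithinEval hs' a hx
      have h1 := (monomial_has_deriv_aux x a k).hasDerivWithinAt (s := s)
      have h2 := (monomial_has_deriv_aux x a (k + 1)).hasDerivWithinAt (s := s)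
      have hl := ((hasDerivWithinAt_id x s).sub_const a).mul_const c
      have hsum := (hT.add ((h1.const_mul ((k + 1)! : ℝ)⁻¹).mul (hl.const_add (Q a)))).add
        ((h2.const_mul ((k + 2)! : ℝ)⁻¹).mul_const c)
      refine hsum.congr_deriv ?_
      simp only [factorial_succ, id, smul_eq_mul]
      push_cast
      field_simp
      ring
    have hPo : (fun x ↦ P x - P a) =o[𝓝[s] a] fun x ↦ (x - a) ^ (k + 2) :=
      hs.isLittleO_pow_succ_real ha hP
        (((isBigO_const_mul_sub_pow _ _ a k).mul_isLittleO hQ).congr_right fun x ↦ by ring)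
    refine (hPo.add (((isBigO_const_mul_sub_pow _ ((k + 1)! : ℝ)⁻¹ a (k + 1)).mul_isLittleO
      hQ).congr_right fun x ↦ by ring)).congr_left fun x ↦ ?_
    simp only [P, taylorWithinEval_succ, taylorWithinEval_self, smul_eq_mul, factorial_succ]
    push_cast
    ring

theorem exists_hasDerivAt_eq_zero_of_le_of_hasDerivWithinAt_neg {f f' : ℝ → ℝ} {a b d : ℝ}
    (hab : a < b) (hfc : ContinuousOn f (Icc a b)) (hf : ∀ x ∈ Ioo a b, HasDerivAt f (f' x) x)
    (hfb : HasDerivWithinAt f d (Icc a b) b) (hd : d < 0) (hle : f a ≤ f b) :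
    ∃ c ∈ Ioo a b, f' c = 0 := by
  obtain ⟨c, hc, hmax⟩ := isCompact_Icc.exists_isMaxOn (nonempty_Icc.2 hab.le) hfc
  have not_max_b : ¬IsMaxOn f (Icc a b) b := fun hb ↦ by
    have hcone : a - b ∈ posTangentConeAt (Icc a b) b :=
      sub_mem_posTangentConeAt_of_segment_subset (by rw [segment_symm, segment_eq_Icc hab.le])
    have := hb.localize.hasFDerivWithinAt_nonpos hfb.hasFDerivWithinAt hcone
    rw [ContinuousLinearMap.toSpanSingleton_apply, smul_eq_mul] at this
    nlinarith [sub_neg.2 hab]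
  have hcb : c ≠ b := by rintro rfl; exact not_max_b hmax
  have hca : c ≠ a := by
    rintro rfl
    exact not_max_b fun y hy ↦ (hmax hy).trans hle
  have hcI : c ∈ Ioo a b := ⟨hc.1.lt_of_ne hca.symm, hc.2.lt_of_ne hcb⟩
  exact ⟨c, hcI, (hmax.isLocalMax (Icc_mem_nhds hcI.1 hcI.2)).hasDerivAt_eq_zero (hf c hcI)⟩

theorem exists_hasDerivAt_eq_zero_of_hasDerivWithinAt_eq_neg_mul {f f' : ℝ → ℝ} {a b κ : ℝ}
    (hab : a < b) (hfc : ContinuousOn f (Icc a b)) (hf : ∀ x ∈ Ioo a b, HasDerivAt f (f' x) x)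
    (hfa : f a = 0) (hfb : HasDerivWithinAt f (-(κ * f b)) (Icc a b) b) (hκ : 0 < κ) :
    ∃ c ∈ Ioo a b, f' c = 0 := by
  rcases lt_trichotomy (f b) 0 with hb | hb | hb
  · obtain ⟨c, hc, h⟩ := exists_hasDerivAt_eq_zero_of_le_of_hasDerivWithinAt_neg hab hfc.neg
      (fun x hx ↦ (hf x hx).neg) hfb.neg (by nlinarith) (by simp only [Pi.neg_apply]; linarith)
    exact ⟨c, hc, neg_eq_zero.1 h⟩
  · exact exists_hasDerivAt_eq_zero hab hfc (hfa.trans hb.symm) hf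
  · exact exists_hasDerivAt_eq_zero_of_le_of_hasDerivWithinAt_neg hab hfc hf hfb (by nlinarith)
      (by linarith)

/-- A Flett-type mean value theorem: for `n = 1` it is Flett's theorem, normalized to
`F' a = F' b = 0`. -/
theorem exists_sub_mul_deriv_eq_of_isLittleO_pow {F F' : ℝ → ℝ} {a b : ℝ} {n : ℕ} (hn : n ≠ 0)
    (hab : a < b) (hF : ∀ x ∈ Ioc a b, HasDerivWithinAt F (F' x) (Icc a b) x) (hFb : F' b = 0)
    (hFa : (fun x ↦ F x - F a) =o[𝓝[Icc a b] a] fun x ↦ (x - a) ^ n) :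
    ∃ η ∈ Ioo a b, (η - a) * F' η = n * (F η - F a) := by
  set J : ℝ → ℝ := fun x ↦ (F x - F a) / (x - a) ^ n
  set J' : ℝ → ℝ := fun x ↦ ((x - a) * F' x - n * (F x - F a)) / (x - a) ^ (n + 1)
  have hJa : J a = 0 := by simp [J]
  have hJ' : ∀ x ∈ Ioc a b, HasDerivWithinAt J (J' x) (Icc a b) x := by
    intro x hx
    have hxa : x - a ≠ 0 := sub_ne_zero.2 hx.1.ne'
    obtain ⟨k, rfl⟩ : ∃ k, n = k + 1 := ⟨n - 1, by omega⟩
    refine (((hF x hx).sub_const (F a)).div (((hasDerivAt_id x).sub_const a).pow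
      (k + 1)).hasDerivWithinAt (pow_ne_zero _ hxa)).congr_deriv ?_
    simp only [J', id, Pi.pow_apply]
    field_simp
    push_cast
    ring
  have hJc : ContinuousOn J (Icc a b) := by
    intro x hx
    rcases hx.1.eq_or_lt with rfl | hax
    · rw [ContinuousWithinAt, hJa]
      exact hFa.tendsto_div_nhds_zero
    · exact (hJ' x ⟨hax, hx.2⟩).continuousWithinAt
  have hJ'b : J' b = -(n * (b - a)⁻¹ * J b) := by
    simp only [J', J, hFb, pow_succ]
    field_simp
    ring
  have hκ : 0 < (n : ℝ) * (b - a)⁻¹ :=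
    mul_pos (mod_cast Nat.pos_of_ne_zero hn) (inv_pos.2 (sub_pos.2 hab))
  obtain ⟨η, hη, hJη⟩ := exists_hasDerivAt_eq_zero_of_hasDerivWithinAt_eq_neg_mul hab hJc
    (fun x hx ↦ (hJ' x ⟨hx.1, hx.2.le⟩).hasDerivAt (Icc_mem_nhds hx.1 hx.2)) hJa
    (hJ'b ▸ hJ' b ⟨hab, le_rfl⟩) hκ
  refine ⟨η, hη, ?_⟩
  rw [← sub_eq_zero]
  exact (div_eq_zero_iff.1 hJη).resolve_right (pow_ne_zero _ (sub_ne_zero.2 hη.1.ne'))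

theorem IteratedDifferentiableOn.exists_taylorWithinEval_eq {h : ℝ → ℝ} {a b : ℝ} {n : ℕ}
    (hn : n ≠ 0) (hab : a < b) (hh : IteratedDifferentiableOn ℝ n h (Icc a b))
    (hend : iteratedDerivWithin n h (Icc a b) a = iteratedDerivWithin n h (Icc a b) b) :
    ∃ η ∈ Ioo a b, taylorWithinEval h n (Icc a b) η a = h a := by
  obtain ⟨m, rfl⟩ : ∃ m, n = m + 1 := ⟨n - 1, by omega⟩
  set s := Icc a b
  set c := iteratedDerivWithin (m + 1) h s a
  set F : ℝ → ℝ := fun x ↦ taylorWithinEval h m s x a + ((m + 1)! : ℝ)⁻¹ * (a - x) ^ (m + 1) * c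
  have hF : ∀ x ∈ Ioc a b, HasDerivWithinAt F
      ((m ! : ℝ)⁻¹ * (a - x) ^ m * (iteratedDerivWithin (m + 1) h s x - c)) s x := by
    intro x hx
    have hT := hh.hasDerivWithinAt_taylorWithinEval (uniqueDiffOn_Icc hab) a
      (Ioc_subset_Icc_self hx)
    refine (hT.add (((monomial_has_deriv_aux x a m).hasDerivWithinAt.const_mul _).mul_const
      c)).congr_deriv ?_
    simp only [smul_eq_mul, factorial_succ]
    push_cast
    field_simp
    ring
  have hFa : F a = h a := by simp [F]
  obtain ⟨η, hη, hηF⟩ := exists_sub_mul_deriv_eq_of_isLittleO_pow m.succ_ne_zero hab hF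
    (by rw [← hend, sub_self, mul_zero])
    (hFa ▸ hh.isLittleO_taylorWithinEval_varying_base (convex_Icc a b) (uniqueDiffOn_Icc hab)
      (left_mem_Icc.2 hab.le))
  refine ⟨η, hη, ?_⟩
  rw [hFa] at hηF
  simp only [F, taylorWithinEval_succ, smul_eq_mul, factorial_succ] at hηF ⊢
  push_cast at hηF ⊢
  field_simp at hηF ⊢
  linear_combination -hηF

/-- **Cauchy-type Pawlikowska theorem.** Let `f, g` be `n`-times differentiable at every
point of `[a,b]` (one-sidedly at the endpoints), where the iterated derivatives are taken
within `[a,b]`, with `g⁽ⁿ⁾(a) ≠ g⁽ⁿ⁾(b)`. Then there exists `η ∈ (a,b)` with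
`f(a) - T_n(f,η)(a) = ((f⁽ⁿ⁾(b) - f⁽ⁿ⁾(a))/(g⁽ⁿ⁾(b) - g⁽ⁿ⁾(a)))·(g(a) - T_n(g,η)(a))`,
where `T_n(h,η)(a) = ∑_{i=0}^{n} (h⁽ⁱ⁾(η)/i!)·(a-η)^i`. -/
theorem cauchy_pawlikowska_theorem (f g : ℝ → ℝ) (a b : ℝ) (n : ℕ) (hn : 1 ≤ n)
    (hab : a < b)
    (hf : ∀ i < n, ∀ x ∈ Set.Icc a b,
      DifferentiableWithinAt ℝ (iteratedDerivWithin i f (Set.Icc a b)) (Set.Icc a b) x)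
    (hg : ∀ i < n, ∀ x ∈ Set.Icc a b,
      DifferentiableWithinAt ℝ (iteratedDerivWithin i g (Set.Icc a b)) (Set.Icc a b) x)
    (hgab : iteratedDerivWithin n g (Set.Icc a b) a ≠ iteratedDerivWithin n g (Set.Icc a b) b) :
    ∃ η ∈ Set.Ioo a b,
      f a - (∑ i ∈ Finset.range (n + 1),
          iteratedDerivWithin i f (Set.Icc a b) η / (Nat.factorial i) * (a - η) ^ i) =
        ((iteratedDerivWithin n f (Set.Icc a b) b - iteratedDerivWithin n f (Set.Icc a b) a) /
          (iteratedDerivWithin n g (Set.Icc a b) b - iteratedDerivWithin n g (Set.Icc a b) a)) *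
        (g a - ∑ i ∈ Finset.range (n + 1),
          iteratedDerivWithin i g (Set.Icc a b) η / (Nat.factorial i) * (a - η) ^ i) := by
  set s := Icc a b
  set Df := iteratedDerivWithin n f s b - iteratedDerivWithin n f s a
  set Dg := iteratedDerivWithin n g s b - iteratedDerivWithin n g s a
  have hf' : IteratedDifferentiableOn ℝ n (Dg • f) s := IteratedDifferentiableOn.const_smul hf Dg
  have hg' : IteratedDifferentiableOn ℝ n (Df • g) s := IteratedDifferentiableOn.const_smul hg Df
  have hψ : ∀ x ∈ s, iteratedDerivWithin n (Dg • f - Df • g) s x =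
      Dg * iteratedDerivWithin n f s x - Df * iteratedDerivWithin n g s x := fun x hx ↦ by
    simp [hf'.iteratedDerivWithin_sub hg' le_rfl hx]
  obtain ⟨η, hη, hηψ⟩ := (hf'.sub hg').exists_taylorWithinEval_eq (by omega) hab
    (by rw [hψ a (left_mem_Icc.2 hab.le), hψ b (right_mem_Icc.2 hab.le)]; ring)
  rw [hf'.taylorWithinEval_sub hg' (Ioo_subset_Icc_self hη), taylorWithinEval_const_smul,
    taylorWithinEval_const_smul] at hηψ
  have hT (u : ℝ → ℝ) : ∑ i ∈ Finset.range (n + 1), iteratedDerivWithin i u s η / i ! * (a - η) ^ i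
      = taylorWithinEval u n s η a := by
    rw [taylor_within_apply]
    exact Finset.sum_congr rfl fun i _ ↦ by rw [smul_eq_mul]; ring
  refine ⟨η, hη, ?_⟩
  rw [hT f, hT g, div_mul_eq_mul_div, eq_div_iff (sub_ne_zero.2 hgab.symm)]
  simp only [Pi.sub_apply, Pi.smul_apply, smul_eq_mul] at hηψ
  linear_combination -hηψ
end

section
/- Trahan-type condition for Pawlikowska's theorem: Let n be a positive integer and let f : ℝ → ℝ be n-times differentiable at every point of the closed interval [a,b] (with a < b). Set 𝔗_f(a) = T_{n-1}(f,b)(a) - f(a). If ( f^{(n)}(a)·(a-b)^n/n! + 𝔗_f(a) ) · ( f^{(n)}(b)·(a-b)^n/n! + 𝔗_f(a) ) ≥ 0, then there exists a point η ∈ (a,b] such that (f(η) - f(a))/(η - a) = Σ_{i=1}^{n} ((-1)^{i+1}/i!) · (η-a)^{i-1} · f^{(i)}(η); equivalently, f(a) = T_n(f,η)(a). -/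
/-!
Write `h(y) = T_{n-1}(f,y)(a) - f(a)` and `H(y) = h(y) / (a - y)^n`. Differentiating in the
expansion point `y` telescopes, and gives `H'(y) = n (T_n(f,y)(a) - f(a)) / (a - y)^(n+1)`, so a
critical point of `H` is exactly a point `η` with `f(a) = T_n(f,η)(a)`. A Peano-type expansion of
every `f⁽ⁱ⁾` around `a` (which needs no continuity of `f⁽ⁿ⁾`) shows `H(y) → -f⁽ⁿ⁾(a)/n!` as
`y → a⁺`, and the hypothesis says precisely that `H'(b)` and `H(b) - lim_{a⁺} H` do not have the
same strict sign. If, say, `H'(b) < 0 ≤ H(b) - lim_{a⁺} H`, then `H` exceeds `H(b)` just left of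
`b`, hence exceeds its values near `a`, and attains an interior maximum on `(a, b)`.
-/

open Finset Filter Set Topology Asymptotics
open scoped Nat

def IsDerivChainOn (D : ℕ → ℝ → ℝ) (n : ℕ) (s : Set ℝ) : Prop :=
  ∀ i < n, ∀ x ∈ s, HasDerivWithinAt (D i) (D (i + 1) x) s x

/-- `taylorDefect D n x y = T_{n-1}(y)(x) - D 0 x`, where `T_{n-1}(y)` is the Taylor polynomial
with `n` terms at the expansion point `y` (the paper's `𝔗`, with `D i` in the role of `f⁽ⁱ⁾`). -/
noncomputable def taylorDefect (D : ℕ → ℝ → ℝ) (n : ℕ) (x y : ℝ) : ℝ :=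
  ∑ i ∈ range n, D i y / i ! * (x - y) ^ i - D 0 x

/-- The Taylor polynomial of degree `n - i` of `D i` at `x₀` (zero for `i > n`). -/
noncomputable def taylorPolyChain (D : ℕ → ℝ → ℝ) (n : ℕ) (x₀ : ℝ) (i : ℕ) (x : ℝ) : ℝ :=
  ∑ j ∈ range (n + 1 - i), D (i + j) x₀ / j ! * (x - x₀) ^ j

lemma taylorDefect_succ (D : ℕ → ℝ → ℝ) (n : ℕ) (x y : ℝ) :
    taylorDefect D (n + 1) x y = taylorDefect D n x y + D n y / n ! * (x - y) ^ n := by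
  simp only [taylorDefect, sum_range_succ]; ring

lemma taylorDefect_self (D : ℕ → ℝ → ℝ) (n : ℕ) (x : ℝ) : taylorDefect D (n + 1) x x = 0 := by
  simp [taylorDefect, sum_range_succ']

lemma taylorDefect_sub (D E : ℕ → ℝ → ℝ) (n : ℕ) (x y : ℝ) :
    taylorDefect (D - E) n x y = taylorDefect D n x y - taylorDefect E n x y := by
  simp only [taylorDefect, Pi.sub_apply, sub_div, sub_mul, sum_sub_distrib]; ring

lemma div_sub_eq_sum_of_taylorDefect_eq_zero {D : ℕ → ℝ → ℝ} {n : ℕ} {x y : ℝ}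
    (h : taylorDefect D (n + 1) x y = 0) (hxy : y ≠ x) :
    (D 0 y - D 0 x) / (y - x) =
      ∑ i ∈ Icc 1 n, (-1 : ℝ) ^ (i + 1) / i ! * (y - x) ^ (i - 1) * D i y := by
  rw [taylorDefect, sum_range_succ'] at h
  rw [div_eq_iff (sub_ne_zero.mpr hxy), ← Finset.Ico_add_one_right_eq_Icc, sum_Ico_eq_sum_range,
    Nat.add_sub_cancel, sum_mul]
  simp only [pow_zero, Nat.factorial_zero, Nat.cast_one, div_one, mul_one] at h
  rw [show D 0 y - D 0 x = -∑ i ∈ range n, D (i + 1) y / (i + 1)! * (x - y) ^ (i + 1) by linarith]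
  rw [← sum_neg_distrib]
  refine sum_congr rfl fun i _ => ?_
  rw [add_comm 1 i, Nat.add_sub_cancel, show x - y = -(y - x) by ring, neg_pow]
  ring

theorem exists_hasDerivAt_eq_zero_of_deriv_neg_of_tendsto_le {H H' : ℝ → ℝ} {a b L : ℝ}
    (hab : a < b) (hH : ∀ x ∈ Ioo a b, HasDerivAt H (H' x) x)
    (hHb : HasDerivWithinAt H (H' b) (Icc a b) b) (hlim : Tendsto H (𝓝[>] a) (𝓝 L))
    (hb : H' b < 0) (hL : L ≤ H b) :
    ∃ η ∈ Ioo a b, H' η = 0 := by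
  obtain ⟨x, hxb, hx⟩ : ∃ x, H b < H x ∧ x ∈ Ioo a b := by
    have hslope : Tendsto (slope H b) (𝓝[<] b) (𝓝 (H' b)) := by
      rwa [hasDerivWithinAt_iff_tendsto_slope, Icc_sdiff_right, nhdsWithin_Ico_eq_nhdsLT hab] at hHb
    obtain ⟨x, hneg, hx⟩ := ((hslope.eventually_lt_const hb).and (Ioo_mem_nhdsLT hab)).exists
    refine ⟨x, ?_, hx⟩
    rw [slope_def_field, div_neg_iff] at hneg
    rcases hneg with ⟨hpos, -⟩ | ⟨-, hpos⟩ <;> linarith [hx.2]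
  obtain ⟨t, htx, ht⟩ :=
    ((hlim.eventually_lt_const (hL.trans_lt hxb)).and (Ioo_mem_nhdsGT hx.1)).exists
  have hcont : ContinuousOn H (Icc t b) := by
    intro y hy
    rcases hy.2.eq_or_lt with rfl | hyb
    · exact hHb.continuousWithinAt.mono (Icc_subset_Icc ht.1.le le_rfl)
    · exact (hH y ⟨ht.1.trans_le hy.1, hyb⟩).continuousAt.continuousWithinAt
  obtain ⟨η, hη, hmax⟩ :=
    isCompact_Icc.exists_isMaxOn (nonempty_Icc.2 (ht.2.trans hx.2).le) hcont
  have hxη : H x ≤ H η := hmax ⟨ht.2.le, hx.2.le⟩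
  have hηt : t < η := hη.1.lt_of_ne (by rintro rfl; linarith)
  have hηb : η < b := hη.2.lt_of_ne (by rintro rfl; linarith)
  have hηab : η ∈ Ioo a b := ⟨ht.1.trans hηt, hηb⟩
  exact ⟨η, hηab, (hmax.isLocalMax (Icc_mem_nhds hηt hηb)).hasDerivAt_eq_zero (hH η hηab)⟩

theorem exists_hasDerivAt_eq_zero_of_deriv_mul_sub_nonpos {H H' : ℝ → ℝ} {a b L : ℝ}
    (hab : a < b) (hH : ∀ x ∈ Ioo a b, HasDerivAt H (H' x) x)
    (hHb : HasDerivWithinAt H (H' b) (Icc a b) b) (hlim : Tendsto H (𝓝[>] a) (𝓝 L))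
    (hb : H' b * (H b - L) ≤ 0) :
    ∃ η ∈ Ioc a b, H' η = 0 := by
  rcases lt_trichotomy (H' b) 0 with hneg | hzero | hpos
  · obtain ⟨η, hη, h⟩ := exists_hasDerivAt_eq_zero_of_deriv_neg_of_tendsto_le hab hH hHb hlim hneg
      (by nlinarith)
    exact ⟨η, Ioo_subset_Ioc_self hη, h⟩
  · exact ⟨b, right_mem_Ioc.2 hab, hzero⟩
  · obtain ⟨η, hη, h⟩ := exists_hasDerivAt_eq_zero_of_deriv_neg_of_tendsto_le (H := -H)
      (H' := -H') hab (fun x hx => (hH x hx).neg) hHb.neg hlim.neg (by simpa using hpos)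
      (by simp only [Pi.neg_apply, neg_le_neg_iff]; nlinarith)
    exact ⟨η, Ioo_subset_Ioc_self hη, neg_eq_zero.mp h⟩

namespace IsDerivChainOn

variable {D E : ℕ → ℝ → ℝ} {n : ℕ} {s : Set ℝ}

lemma shift (hD : IsDerivChainOn D n s) (k : ℕ) :
    IsDerivChainOn (fun i => D (k + i)) (n - k) s :=
  fun i hi x hx => hD (k + i) (by omega) x hx

lemma sub (hD : IsDerivChainOn D n s) (hE : IsDerivChainOn E n s) :
    IsDerivChainOn (D - E) n s :=
  fun i hi x hx => (hD i hi x hx).sub (hE i hi x hx)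

theorem isLittleO_pow_of_eq_zero {x₀ : ℝ} (hs : Convex ℝ s) (hx₀ : x₀ ∈ s)
    (hD : IsDerivChainOn D (n + 1) s) (hD₀ : ∀ i ≤ n + 1, D i x₀ = 0) :
    D 0 =o[𝓝[s] x₀] fun x => (x - x₀) ^ (n + 1) := by
  induction n generalizing D with
  | zero => simpa [hD₀] using (hD 0 one_pos x₀ hx₀).isLittleO
  | succ n ih =>
    have hD' : D 1 =o[𝓝[s] x₀] fun x => (x - x₀) ^ (n + 1) :=
      ih (hD.shift 1) fun i hi => hD₀ (1 + i) (by omega)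
    simpa [hD₀ 0 (by omega)] using hs.isLittleO_pow_succ_real hx₀ (hD 0 (by omega)) hD'

theorem hasDerivWithinAt_taylorDefect {x y : ℝ} (hD : IsDerivChainOn D (n + 1) s) (hy : y ∈ s) :
    HasDerivWithinAt (taylorDefect D (n + 1) x) (D (n + 1) y / n ! * (x - y) ^ n) s y := by
  induction n with
  | zero =>
    have h1 : taylorDefect D 1 x = fun z => D 0 z - D 0 x := by ext; simp [taylorDefect]
    simpa [h1] using (hD 0 one_pos y hy).sub_const (D 0 x)
  | succ n ih =>
    have hterm := ((hD (n + 1) (by omega) y hy).div_const ((n + 1)! : ℝ)).fun_mul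
      (((hasDerivWithinAt_id y s).const_sub x).fun_pow (n + 1))
    rw [show taylorDefect D (n + 2) x = fun z => taylorDefect D (n + 1) x z +
      D (n + 1) z / (n + 1)! * (x - z) ^ (n + 1) from funext (taylorDefect_succ D (n + 1) x)]
    refine ((ih fun i hi => hD i (by omega)).fun_add hterm).congr_deriv ?_
    simp only [Nat.factorial_succ, Nat.cast_mul, Nat.cast_succ, Nat.add_sub_cancel, id]
    field_simp
    ring

end IsDerivChainOn

lemma hasDerivAt_sum_range_div_factorial_mul_pow (c : ℕ → ℝ) (N : ℕ) (x₀ x : ℝ) :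
    HasDerivAt (fun x => ∑ j ∈ range (N + 1), c j / j ! * (x - x₀) ^ j)
      (∑ j ∈ range N, c (j + 1) / j ! * (x - x₀) ^ j) x := by
  have h := HasDerivAt.fun_sum (u := range (N + 1)) fun j _ =>
    (((hasDerivAt_id x).sub_const x₀).pow j).const_mul (c j / j !)
  refine h.congr_deriv ?_
  rw [sum_range_succ']
  simp only [Nat.factorial_succ, Nat.cast_mul, Nat.cast_succ, id_eq, CharP.cast_eq_zero,
    zero_mul, mul_zero, add_zero, Nat.add_sub_cancel, mul_one]
  refine sum_congr rfl fun j _ => ?_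
  field_simp

section taylorPolyChain

variable (D : ℕ → ℝ → ℝ) (n : ℕ) (x₀ : ℝ)

lemma hasDerivAt_taylorPolyChain (i : ℕ) (x : ℝ) :
    HasDerivAt (taylorPolyChain D n x₀ i) (taylorPolyChain D n x₀ (i + 1) x) x := by
  rcases Nat.lt_or_ge n i with hni | hin
  · have hzero (j : ℕ) (hj : n < j) : taylorPolyChain D n x₀ j = 0 := by
      ext; simp [taylorPolyChain, Nat.sub_eq_zero_of_le hj]
    rw [hzero i hni, hzero (i + 1) (by omega)]
    exact hasDerivAt_const x 0
  · have h := hasDerivAt_sum_range_div_factorial_mul_pow (fun j => D (i + j) x₀) (n - i) x₀ x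
    rw [show n - i + 1 = n + 1 - i by omega] at h
    refine h.congr_deriv ?_
    simp [taylorPolyChain, show n + 1 - (i + 1) = n - i by omega, add_assoc, add_comm 1]

lemma isDerivChainOn_taylorPolyChain (m : ℕ) (s : Set ℝ) :
    IsDerivChainOn (taylorPolyChain D n x₀) m s :=
  fun i _ x _ => (hasDerivAt_taylorPolyChain D n x₀ i x).hasDerivWithinAt

lemma taylorPolyChain_self {i : ℕ} (hi : i ≤ n) : taylorPolyChain D n x₀ i x₀ = D i x₀ := by
  rw [taylorPolyChain, show n + 1 - i = n - i + 1 by omega, sum_range_succ']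
  simp

lemma taylorPolyChain_top (x : ℝ) : taylorPolyChain D n x₀ n x = D n x₀ := by
  simp [taylorPolyChain]

lemma taylorDefect_taylorPolyChain (y : ℝ) :
    taylorDefect (taylorPolyChain D n x₀) (n + 1) x₀ y = 0 := by
  have hderiv (z : ℝ) : HasDerivAt (taylorDefect (taylorPolyChain D n x₀) (n + 1) x₀) 0 z := by
    have h := (isDerivChainOn_taylorPolyChain D n x₀ (n + 1) univ).hasDerivWithinAt_taylorDefect
      (x := x₀) (mem_univ z)
    simpa [taylorPolyChain, hasDerivWithinAt_univ] using h
  rw [is_const_of_deriv_eq_zero (fun z => (hderiv z).differentiableAt)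
    (fun z => (hderiv z).deriv) y x₀, taylorDefect_self]

end taylorPolyChain

namespace IsDerivChainOn

variable {D : ℕ → ℝ → ℝ} {n : ℕ} {s : Set ℝ} {x₀ : ℝ}

theorem isLittleO_taylorDefect (hs : Convex ℝ s) (hx₀ : x₀ ∈ s)
    (hD : IsDerivChainOn D (n + 1) s) :
    (fun y => taylorDefect D (n + 1) x₀ y + D (n + 1) x₀ / (n + 1)! * (x₀ - y) ^ (n + 1))
      =o[𝓝[s] x₀] fun y => (y - x₀) ^ (n + 1) := by
  -- `E` vanishes to order `n + 1` at `x₀`, and Taylor's formula is exact for the polynomials.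
  set E := D - taylorPolyChain D (n + 1) x₀
  have hE : IsDerivChainOn E (n + 1) s := hD.sub (isDerivChainOn_taylorPolyChain D _ x₀ _ s)
  have hE₀ (i : ℕ) (hi : i ≤ n + 1) : E i x₀ = 0 := by
    simp [E, taylorPolyChain_self D _ x₀ hi]
  have hsplit : (fun y => taylorDefect D (n + 1) x₀ y +
      D (n + 1) x₀ / (n + 1)! * (x₀ - y) ^ (n + 1)) = taylorDefect E (n + 1) x₀ := by
    ext y
    have h := taylorDefect_taylorPolyChain D (n + 1) x₀ y
    rw [taylorDefect_succ, taylorPolyChain_top] at h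
    rw [taylorDefect_sub]
    linarith
  have hterm (i : ℕ) (hi : i ∈ range (n + 1)) :
      (fun y => E i y / i ! * (x₀ - y) ^ i) =o[𝓝[s] x₀] fun y => (y - x₀) ^ (n + 1) := by
    have hi : i ≤ n := Nat.lt_succ_iff.mp (mem_range.mp hi)
    have hEi : E i =o[𝓝[s] x₀] fun y => (y - x₀) ^ (n - i + 1) := by
      refine isLittleO_pow_of_eq_zero hs hx₀ (D := fun j => E (i + j)) ?_
        fun j hj => hE₀ _ (by omega)
      simpa [show n + 1 - i = n - i + 1 by omega] using hE.shift i
    have hpow : (fun y => (x₀ - y) ^ i) =O[𝓝[s] x₀] fun y => (y - x₀) ^ i :=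
      isBigO_of_le _ fun y => by rw [norm_pow, norm_pow, norm_sub_rev]
    refine ((hEi.mul_isBigO hpow).const_mul_left (i ! : ℝ)⁻¹).congr
      (fun y => by ring) (fun y => ?_)
    rw [← pow_add, show n - i + 1 + i = n + 1 by omega]
  rw [hsplit]
  refine (IsLittleO.fun_sum hterm).congr_left fun y => ?_
  simp [taylorDefect, hE₀ 0 (Nat.zero_le _)]

theorem tendsto_taylorDefect_div_pow (hs : Convex ℝ s) (hx₀ : x₀ ∈ s)
    (hD : IsDerivChainOn D (n + 1) s) :
    Tendsto (fun y => taylorDefect D (n + 1) x₀ y / (x₀ - y) ^ (n + 1)) (𝓝[s \ {x₀}] x₀)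
      (𝓝 (-(D (n + 1) x₀ / (n + 1)!))) := by
  set c := D (n + 1) x₀ / (n + 1)!
  have hpow : (fun y => (y - x₀) ^ (n + 1)) =O[𝓝[s] x₀] fun y => (x₀ - y) ^ (n + 1) :=
    isBigO_of_le _ fun y => by rw [norm_pow, norm_pow, norm_sub_rev]
  have h := (((hD.isLittleO_taylorDefect hs hx₀).trans_isBigO hpow).tendsto_div_nhds_zero.mono_left
    (nhdsWithin_mono _ (sdiff_subset (t := {x₀})))).sub_const c
  rw [zero_sub] at h
  refine h.congr' ?_
  filter_upwards [self_mem_nhdsWithin] with y hy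
  have : (x₀ - y) ^ (n + 1) ≠ 0 := pow_ne_zero _ (sub_ne_zero.mpr (Ne.symm hy.2))
  rw [add_div, mul_div_cancel_right₀ _ this, add_sub_cancel_right]

theorem hasDerivWithinAt_taylorDefect_div_pow {x y : ℝ} (hD : IsDerivChainOn D (n + 1) s)
    (hy : y ∈ s) (hyx : y ≠ x) :
    HasDerivWithinAt (fun z => taylorDefect D (n + 1) x z / (x - z) ^ (n + 1))
      ((n + 1) * taylorDefect D (n + 2) x y / (x - y) ^ (n + 2)) s y := by
  have hxy : x - y ≠ 0 := sub_ne_zero.mpr hyx.symm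
  have hpow := ((hasDerivWithinAt_id y s).const_sub x).fun_pow (n + 1)
  refine ((hD.hasDerivWithinAt_taylorDefect hy).div hpow (pow_ne_zero _ hxy)).congr_deriv ?_
  rw [taylorDefect_succ _ (n + 1)]
  simp only [id, Nat.add_sub_cancel, Nat.factorial_succ, Nat.cast_mul, Nat.cast_succ]
  field_simp
  ring

theorem exists_taylorDefect_eq_zero {a b : ℝ} (hab : a < b)
    (hD : IsDerivChainOn D (n + 1) (Icc a b))
    (hcond : 0 ≤ (D (n + 1) a / (n + 1)! * (a - b) ^ (n + 1) + taylorDefect D (n + 1) a b) *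
      taylorDefect D (n + 2) a b) :
    ∃ η ∈ Ioc a b, taylorDefect D (n + 2) a η = 0 := by
  have hderiv (y : ℝ) (hy : y ∈ Icc a b) (hya : y ≠ a) :=
    hD.hasDerivWithinAt_taylorDefect_div_pow (x := a) hy hya
  have hlim := hD.tendsto_taylorDefect_div_pow (convex_Icc a b) (left_mem_Icc.2 hab.le)
  rw [Icc_sdiff_left, nhdsWithin_Ioc_eq_nhdsGT hab] at hlim
  set T₁ := taylorDefect D (n + 1) a b
  set T₂ := taylorDefect D (n + 2) a b
  set c := D (n + 1) a / (n + 1)!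
  have hsign : (n + 1) * T₂ / (a - b) ^ (n + 2) * (T₁ / (a - b) ^ (n + 1) - -c) ≤ 0 := by
    have hab' : a - b ≠ 0 := sub_ne_zero.mpr hab.ne
    have hodd : (a - b) ^ (2 * n + 3) < 0 := Odd.pow_neg ⟨n + 1, by ring⟩ (sub_neg.mpr hab)
    rw [show (n + 1) * T₂ / (a - b) ^ (n + 2) * (T₁ / (a - b) ^ (n + 1) - -c) =
      (n + 1) * ((c * (a - b) ^ (n + 1) + T₁) * T₂) / (a - b) ^ (2 * n + 3) by field_simp; ring]
    exact div_nonpos_of_nonneg_of_nonpos (by positivity) hodd.le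
  obtain ⟨η, hη, hzero⟩ := exists_hasDerivAt_eq_zero_of_deriv_mul_sub_nonpos hab
    (fun y hy => (hderiv y (Ioo_subset_Icc_self hy) hy.1.ne').hasDerivAt (Icc_mem_nhds hy.1 hy.2))
    (hderiv b (right_mem_Icc.2 hab.le) hab.ne') hlim hsign
  refine ⟨η, hη, ?_⟩
  simpa [sub_ne_zero.mpr hη.1.ne, Nat.cast_add_one_ne_zero] using hzero

end IsDerivChainOn

/-- **Trahan-type condition for Pawlikowska's theorem.** Let `f` be `n`-times
differentiable at every point of `[a,b]` (one-sidedly at the endpoints), where the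
iterated derivatives are taken within `[a,b]`, and set
`𝔗_f(a) = T_{n-1}(f,b)(a) - f(a) = ∑_{i=0}^{n-1} (f⁽ⁱ⁾(b)/i!)·(a-b)^i - f(a)`. If
`(f⁽ⁿ⁾(a)·(a-b)^n/n! + 𝔗_f(a)) · (f⁽ⁿ⁾(b)·(a-b)^n/n! + 𝔗_f(a)) ≥ 0`, then there exists
`η ∈ (a,b]` with `(f(η) - f(a))/(η - a) = ∑_{i=1}^{n} ((-1)^{i+1}/i!)·(η-a)^{i-1}·f⁽ⁱ⁾(η)`. -/
theorem trahan_condition_pawlikowska (f : ℝ → ℝ) (a b : ℝ) (n : ℕ) (hn : 1 ≤ n)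
    (hab : a < b)
    (hf : ∀ i < n, ∀ x ∈ Set.Icc a b,
      DifferentiableWithinAt ℝ (iteratedDerivWithin i f (Set.Icc a b)) (Set.Icc a b) x)
    (hcond :
      (iteratedDerivWithin n f (Set.Icc a b) a * (a - b) ^ n / (Nat.factorial n) +
          ((∑ i ∈ Finset.range n,
            iteratedDerivWithin i f (Set.Icc a b) b / (Nat.factorial i) * (a - b) ^ i) - f a)) *
        (iteratedDerivWithin n f (Set.Icc a b) b * (a - b) ^ n / (Nat.factorial n) +
          ((∑ i ∈ Finset.range n,
            iteratedDerivWithin i f (Set.Icc a b) b / (Nat.factorial i) * (a - b) ^ i) - f a))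
        ≥ 0) :
    ∃ η ∈ Set.Ioc a b, (f η - f a) / (η - a) =
      ∑ i ∈ Finset.Icc 1 n, (-1 : ℝ) ^ (i + 1) / (Nat.factorial i) * (η - a) ^ (i - 1) *
        iteratedDerivWithin i f (Set.Icc a b) η := by
  obtain ⟨m, rfl⟩ : ∃ m, n = m + 1 := ⟨n - 1, by omega⟩
  set D : ℕ → ℝ → ℝ := fun i => iteratedDerivWithin i f (Icc a b)
  have hD : IsDerivChainOn D (m + 1) (Icc a b) := fun i hi x hx => by
    simpa [D, iteratedDerivWithin_succ] using (hf i hi x hx).hasDerivWithinAt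
  have hcond' : 0 ≤ (D (m + 1) a / (m + 1)! * (a - b) ^ (m + 1) + taylorDefect D (m + 1) a b) *
      taylorDefect D (m + 2) a b := by
    rw [taylorDefect_succ _ (m + 1)]
    convert hcond.le using 2 <;> simp [taylorDefect, D] <;> ring
  obtain ⟨η, hη, hzero⟩ := hD.exists_taylorDefect_eq_zero hab hcond'
  exact ⟨η, hη, by simpa [D] using div_sub_eq_sum_of_taylorDefect_eq_zero hzero hη.1.ne'⟩
end
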